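/- arXiv:2604.23906 — 10 statements merged into one kernel-verified Lean document; each statement's English description precedes it below -/
import Mathlib

section
/- Let k+1 be an odd prime. For every vector v in (Z/(k+1))^k that is nonzero but has at least one zero coordinate, there exist units s and r in (Z/(k+1))^* such that every coordinate of s·v + r·(1,2,...,k) lies in {1,...,k-1} (mod k+1). -/
/-!
Put `w_q(i) = v i + q * (i + 1)` and `H(q) = ∏ i, w_q(i)`, a polynomial of degree `k = p - 1`
with leading coefficient `k! = -1`; hence `∑_q H(q) = 1`. It suffices to find `q ≠ 0` for
which `w_q` never vanishes yet misses some nonzero value `c`: then `s = -c⁻¹`, `r = -c⁻¹ q`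
keep every coordinate away from both `0` and `-1`. If no such `q` exists, then `H` vanishes
on the set `S` of roots `-v i / (i + 1)` and, by Wilson's theorem, equals `-1` off `S`, since
there `w_q` is a bijection onto the units. So `∑_q H(q) = -(p - #S) = #S`, whence
`#S ≡ 1 (mod p)`. This contradicts `2 ≤ #S ≤ p - 1`, as `S` contains `0` (from a zero
coordinate) and a nonzero root (from a nonzero one).
-/

open Finset Polynomial

namespace FiniteField

variable {K : Type*} [Field K] [Fintype K]

theorem sum_pow_card_sub_one : ∑ x : K, x ^ (Fintype.card K - 1) = -1 := by
  classical
  have hq : 1 < Fintype.card K := Fintype.one_lt_card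
  rw [← add_sum_erase _ _ (mem_univ 0), zero_pow (by omega), zero_add,
    sum_congr rfl fun x hx => pow_card_sub_one_eq_one x (ne_of_mem_erase hx),
    sum_const, card_erase_of_mem (mem_univ 0), card_univ, nsmul_one, Nat.cast_sub hq.le,
    cast_card_eq_zero, Nat.cast_one, zero_sub]

theorem sum_eval_eq_neg_coeff {P : K[X]} (hP : P.natDegree < Fintype.card K) :
    ∑ x : K, P.eval x = -P.coeff (Fintype.card K - 1) := by
  simp_rw [eval_eq_sum_range' hP]
  rw [sum_comm]
  simp_rw [← mul_sum]
  rw [← Nat.sub_add_cancel Fintype.card_pos, sum_range_succ, Nat.add_sub_cancel,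
    sum_eq_zero fun i hi => by rw [sum_pow_lt_card_sub_one K i (mem_range.1 hi), mul_zero],
    sum_pow_card_sub_one, zero_add, mul_neg_one]

variable {ι : Type*} [Fintype ι]

theorem sum_prod_add_mul_eq_neg_prod (hι : Fintype.card ι = Fintype.card K - 1)
    (v t : ι → K) : ∑ x : K, ∏ i, (v i + x * t i) = -∏ i, t i := by
  have hdeg : ∀ i ∈ univ, (C (v i) + X * C (t i)).natDegree ≤ 1 := fun i _ => by
    compute_degree
  have hP : (∏ i, (C (v i) + X * C (t i))).natDegree < Fintype.card K := by
    have := (natDegree_prod_le _ _).trans (sum_le_card_nsmul _ _ _ hdeg)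
    simp only [card_univ, hι, smul_eq_mul, mul_one] at this
    have : 0 < Fintype.card K := Fintype.card_pos
    omega
  have hcoeff := coeff_prod_of_natDegree_le (s := univ) _ 1 hdeg
  rw [card_univ, hι, mul_one] at hcoeff
  have h := sum_eval_eq_neg_coeff hP
  rw [hcoeff] at h
  simp only [eval_prod, eval_add, eval_C, eval_mul, eval_X] at h
  simpa using h

variable [DecidableEq K]

theorem prod_eq_neg_one_of_injective (hι : Fintype.card ι = Fintype.card K - 1) {f : ι → K}
    (hf : Function.Injective f) (hf0 : ∀ i, f i ≠ 0) : ∏ i, f i = -1 := by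
  set g : ι → Kˣ := fun i => Units.mk0 (f i) (hf0 i)
  have hg : Function.Bijective g := by
    rw [Fintype.bijective_iff_injective_and_card, Fintype.card_units, hι]
    exact ⟨fun i j h => hf (congrArg Units.val h), rfl⟩
  have := congrArg Units.val
    ((Fintype.prod_bijective g hg _ _ fun _ => rfl).trans prod_univ_units_id_eq_neg_one)
  simpa [g] using this

theorem exists_ne_zero_forall_ne_of_not_injective (hι : Fintype.card ι = Fintype.card K - 1)
    {f : ι → K} (hf : ¬Function.Injective f) (hf0 : ∀ i, f i ≠ 0) :
    ∃ c ≠ 0, ∀ i, f i ≠ c := by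
  set g : ι → Kˣ := fun i => Units.mk0 (f i) (hf0 i)
  have hg : ¬Function.Surjective g := fun hs => by
    have := ((Fintype.bijective_iff_surjective_and_card g).2
      ⟨hs, by rw [Fintype.card_units, hι]⟩).1
    exact hf fun i j h => this (Units.ext h)
  obtain ⟨c, hc⟩ := not_forall.1 hg
  simp only [not_exists] at hc
  exact ⟨c, c.ne_zero, fun i h => hc i (Units.ext h)⟩

end FiniteField

namespace ZMod

theorem val_natCast_add_one_of_lt {n a : ℕ} (h : a < n) :
    ((a : ZMod (n + 1)) + 1).val = a + 1 := by
  rw [← Nat.cast_add_one, val_cast_of_lt (by omega)]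

theorem one_le_val_and_val_le_of_ne_zero_of_ne_neg_one {n : ℕ} {y : ZMod (n + 1)} (h0 : y ≠ 0)
    (h1 : y ≠ -1) : 1 ≤ y.val ∧ y.val ≤ n - 1 := by
  have hlt := val_lt y
  have hval0 : y.val ≠ 0 := fun h => h0 ((val_eq_zero y).1 h)
  have hvaln : y.val ≠ n := fun h => h1 (val_injective _ (h.trans (val_neg_one n).symm))
  omega

variable {p : ℕ} [Fact p.Prime] {ι : Type*} [Fintype ι]

theorem exists_ne_zero_forall_add_mul_ne_zero_not_injective (hι : Fintype.card ι = p - 1)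
    {v t : ι → ZMod p} (ht : Function.Injective t) (ht0 : ∀ i, t i ≠ 0) (hv : v ≠ 0)
    (hz : ∃ i, v i = 0) :
    ∃ q ≠ 0, (∀ i, v i + q * t i ≠ 0) ∧ ¬Function.Injective fun i => v i + q * t i := by
  classical
  have hιK : Fintype.card ι = Fintype.card (ZMod p) - 1 := by rw [ZMod.card]; exact hι
  by_contra! hcon
  set S := univ.image fun i => -v i / t i
  have hS0 : 0 ∈ S := by
    obtain ⟨i, hi⟩ := hz
    exact mem_image.2 ⟨i, mem_univ _, by simp [hi]⟩
  have hS : 1 < #S := by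
    obtain ⟨i, hi⟩ := Function.ne_iff.1 hv
    refine one_lt_card.2 ⟨0, hS0, -v i / t i, mem_image_of_mem _ (mem_univ i), ?_⟩
    exact (div_ne_zero (neg_ne_zero.2 hi) (ht0 i)).symm
  have hSp : #S < p := card_image_le.trans_lt <| by
    rw [card_univ, hι]; exact Nat.sub_lt (Fact.out : p.Prime).pos one_pos
  have hroot : ∀ q ∈ S, ∏ i, (v i + q * t i) = 0 := by
    intro q hq
    obtain ⟨i, -, rfl⟩ := mem_image.1 hq
    exact prod_eq_zero (mem_univ i) <| by rw [div_mul_cancel₀ _ (ht0 i), add_neg_cancel]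
  have hunit : ∀ q ∉ S, ∏ i, (v i + q * t i) = -1 := by
    intro q hq
    have hw0 : ∀ i, v i + q * t i ≠ 0 := fun i hi =>
      hq (mem_image.2 ⟨i, mem_univ _, (div_eq_iff (ht0 i)).2 (by linear_combination -hi)⟩)
    exact FiniteField.prod_eq_neg_one_of_injective hιK
      (hcon q (fun h => hq (h ▸ hS0)) hw0) hw0
  have hsum : ∑ q : ZMod p, ∏ i, (v i + q * t i) = #S := by
    rw [← sum_compl_add_sum S, sum_eq_zero hroot, add_zero,
      sum_congr rfl fun q hq => hunit q (mem_compl.1 hq), sum_const, card_compl, ZMod.card,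
      nsmul_eq_mul, mul_neg_one, Nat.cast_sub hSp.le, natCast_self, zero_sub, neg_neg]
  have hS1 : ((#S : ℕ) : ZMod p) = 1 := by
    rw [← hsum, FiniteField.sum_prod_add_mul_eq_neg_prod hιK,
      FiniteField.prod_eq_neg_one_of_injective hιK ht ht0, neg_neg]
  have := congrArg ZMod.val hS1
  rw [val_cast_of_lt hSp, val_one] at this
  omega

end ZMod

theorem stmt_0_general (k : ℕ) (hp : Nat.Prime (k + 1))
    (v : Fin k → ZMod (k + 1)) (hv : v ≠ 0) (hz : ∃ i, v i = 0) :
    ∃ s r : (ZMod (k + 1))ˣ, ∀ i : Fin k,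
      1 ≤ ((s : ZMod (k + 1)) * v i + (r : ZMod (k + 1)) * ((i : ℕ) + 1)).val ∧
      ((s : ZMod (k + 1)) * v i + (r : ZMod (k + 1)) * ((i : ℕ) + 1)).val ≤ k - 1 := by
  have := Fact.mk hp
  set t : Fin k → ZMod (k + 1) := fun i => (i : ℕ) + 1
  have ht : Function.Injective t := fun i j h => Fin.ext <| by
    simpa [t, ZMod.val_natCast_add_one_of_lt i.2, ZMod.val_natCast_add_one_of_lt j.2] using
      congrArg ZMod.val h
  have ht0 : ∀ i, t i ≠ 0 := fun i h => by
    simpa [t, ZMod.val_natCast_add_one_of_lt i.2] using congrArg ZMod.val h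
  obtain ⟨q, hq0, hw0, hw⟩ :=
    ZMod.exists_ne_zero_forall_add_mul_ne_zero_not_injective (by simp) ht ht0 hv hz
  obtain ⟨c, hc0, hc⟩ :=
    FiniteField.exists_ne_zero_forall_ne_of_not_injective (by simp [ZMod.card]) hw hw0
  have hs : -c⁻¹ ≠ 0 := neg_ne_zero.2 (inv_ne_zero hc0)
  refine ⟨Units.mk0 _ hs, Units.mk0 _ (mul_ne_zero hs hq0), fun i => ?_⟩
  have hy : -c⁻¹ * v i + -c⁻¹ * q * ((i : ℕ) + 1) = -c⁻¹ * (v i + q * t i) := by ring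
  simp only [Units.val_mk0, hy]
  refine ZMod.one_le_val_and_val_le_of_ne_zero_of_ne_neg_one (mul_ne_zero hs (hw0 i))
    fun h => hc i ?_
  rw [neg_mul, neg_inj, inv_mul_eq_one₀ hc0] at h
  exact h.symm

theorem stmt_0 (k : ℕ) (hp : Nat.Prime (k + 1)) (hodd : Odd (k + 1))
    (v : Fin k → ZMod (k + 1)) (hv : v ≠ 0) (hz : ∃ i, v i = 0) :
    ∃ s r : (ZMod (k + 1))ˣ, ∀ i : Fin k,
      1 ≤ ((s : ZMod (k + 1)) * v i + (r : ZMod (k + 1)) * ((i : ℕ) + 1)).val ∧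
      ((s : ZMod (k + 1)) * v i + (r : ZMod (k + 1)) * ((i : ℕ) + 1)).val ≤ k - 1 :=
  stmt_0_general k hp v hv hz
end

section
/- Let k+1 be an odd prime and let v be a nonzero vector in (Z/(k+1))^k with at least one zero coordinate. If for all units s, r in (Z/(k+1))^* the vector s·v + r·(1,2,...,k) has some coordinate in {0, -1} (mod k+1), then v = 0 (contradiction); equivalently, no nonzero vector with a zero coordinate has this property. -/
theorem stmt_1 (k : ℕ) (hp : Nat.Prime (k + 1)) (hodd : Odd (k + 1))
    (v : Fin k → ZMod (k + 1)) (hz : ∃ i, v i = 0)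
    (h : ∀ s r : (ZMod (k + 1))ˣ, ∃ i : Fin k,
      (s : ZMod (k + 1)) * v i + (r : ZMod (k + 1)) * ((i : ℕ) + 1) = 0 ∨
      (s : ZMod (k + 1)) * v i + (r : ZMod (k + 1)) * ((i : ℕ) + 1) = -1) :
    v = 0 := by
  classical
  haveI : Fact (Nat.Prime (k + 1)) := ⟨hp⟩
  by_contra hv
  obtain ⟨j, hj⟩ : ∃ j, v j ≠ 0 := by
    by_contra h'
    push_neg at h'
    exact hv (funext fun i => h' i)
  obtain ⟨i0, hi0⟩ := hz
  have hk1 : 1 ≤ k := by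
    rcases Nat.lt_or_ge k 1 with hk | hk
    · interval_cases k
      · exact absurd hp (by norm_num)
    · exact hk
  -- the constants a i = i+1 in ZMod (k+1)
  set A : Fin k → ZMod (k + 1) := fun i => ((i : ℕ) : ZMod (k + 1)) + 1 with hA
  have hAcast : ∀ i : Fin k, A i = (((i : ℕ) + 1 : ℕ) : ZMod (k + 1)) := by
    intro i; simp [hA]
  have hAne : ∀ i : Fin k, A i ≠ 0 := by
    intro i hcon
    rw [hAcast i, ZMod.natCast_eq_zero_iff] at hcon
    have := Nat.le_of_dvd (Nat.succ_pos _) hcon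
    omega
  have hAinj : Function.Injective A := by
    intro i i' hii
    rw [hAcast i, hAcast i'] at hii
    have h1 : ((i : ℕ) + 1) % (k + 1) = ((i' : ℕ) + 1) % (k + 1) := by
      have := congrArg ZMod.val hii
      rwa [ZMod.val_natCast, ZMod.val_natCast] at this
    have hi1 : (i : ℕ) + 1 < k + 1 := by omega
    have hi2 : (i' : ℕ) + 1 < k + 1 := by omega
    rw [Nat.mod_eq_of_lt hi1, Nat.mod_eq_of_lt hi2] at h1
    exact Fin.ext (by omega)
  have hcardu : Fintype.card (ZMod (k + 1))ˣ = k := by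
    rw [ZMod.card_units]; omega
  -- key dichotomy
  have key : ∀ t : ZMod (k + 1), (∃ i, t * v i + A i = 0) ∨
      (∏ i : Fin k, (t * v i + A i) = -1) := by
    intro t
    by_cases hex : ∃ i, t * v i + A i = 0
    · exact Or.inl hex
    right
    push_neg at hex
    set g : Fin k → (ZMod (k + 1))ˣ := fun i => Units.mk0 _ (hex i) with hg
    have hgbij : Function.Bijective g := by
      by_cases ht : t = 0
      · apply (Fintype.bijective_iff_injective_and_card g).mpr
        refine ⟨?_, by simp [hcardu]⟩
        intro i i' hii
        have : t * v i + A i = t * v i' + A i' := by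
          have := congrArg (fun u : (ZMod (k + 1))ˣ => (u : ZMod (k + 1))) hii
          simpa [hg] using this
        rw [ht] at this
        simp only [zero_mul, zero_add] at this
        exact hAinj this
      · apply (Fintype.bijective_iff_surjective_and_card g).mpr
        refine ⟨?_, by simp [hcardu]⟩
        intro c
        set r : (ZMod (k + 1))ˣ := -c⁻¹ with hr
        set s : (ZMod (k + 1))ˣ := Units.mk0 t ht * r with hs
        obtain ⟨i, hi⟩ := h s r
        have hsr : (s : ZMod (k + 1)) = t * (r : ZMod (k + 1)) := by
          simp [hs]
        have hfact : (s : ZMod (k + 1)) * v i + (r : ZMod (k + 1)) * ((i : ℕ) + 1)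
            = (r : ZMod (k + 1)) * (t * v i + A i) := by
          rw [hsr, hA]; ring
        rcases hi with hi | hi
        · rw [hfact] at hi
          rcases mul_eq_zero.mp hi with hi' | hi'
          · exact absurd hi' (Units.ne_zero r)
          · exact absurd hi' (hex i)
        · rw [hfact] at hi
          refine ⟨i, ?_⟩
          apply Units.ext
          have hval : (g i : ZMod (k + 1)) = t * v i + A i := by simp [hg]
          have hrinv : t * v i + A i = -(r⁻¹ : (ZMod (k+1))ˣ) := by
            have := congrArg (fun x => ((r⁻¹ : (ZMod (k+1))ˣ) : ZMod (k + 1)) * x) hi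
            rw [← mul_assoc] at this
            rw [show ((r⁻¹ : (ZMod (k+1))ˣ) : ZMod (k + 1)) * (r : ZMod (k + 1)) = 1 by
              rw [← Units.val_mul]; simp] at this
            rw [one_mul] at this
            rw [this]; ring
          have hrc : -(r⁻¹ : (ZMod (k+1))ˣ) = (c : ZMod (k + 1)) := by
            rw [hr]
            simp
          rw [hval, hrinv, hrc]
    calc ∏ i : Fin k, (t * v i + A i) = ∏ i : Fin k, ((g i : ZMod (k + 1))) := by
            apply Finset.prod_congr rfl
            intro i _
            simp [hg]
      _ = ((∏ i : Fin k, g i : (ZMod (k + 1))ˣ) : ZMod (k + 1)) := by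
            push_cast; rfl
      _ = (((-1 : (ZMod (k + 1))ˣ)) : ZMod (k + 1)) := by
            congr 1
            rw [Fintype.prod_bijective g hgbij (fun i => g i) (fun u => u) (fun i => rfl)]
            exact FiniteField.prod_univ_units_id_eq_neg_one
      _ = -1 := by simp
  -- the polynomial
  set Q : Polynomial (ZMod (k + 1)) :=
    ∏ i : Fin k, (Polynomial.C (v i) * Polynomial.X + Polynomial.C (A i)) with hQ
  have hQeval : ∀ t, Q.eval t = ∏ i : Fin k, (t * v i + A i) := by
    intro t
    rw [hQ, Polynomial.eval_prod]
    apply Finset.prod_congr rfl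
    intro i _
    simp only [Polynomial.eval_add, Polynomial.eval_mul, Polynomial.eval_C, Polynomial.eval_X]
    ring
  have hQdeg : Q.natDegree ≤ k - 1 := by
    refine le_trans (Polynomial.natDegree_prod_le _ _) ?_
    have hsplit : ∑ i : Fin k, (Polynomial.C (v i) * Polynomial.X
        + Polynomial.C (A i)).natDegree
        = (Polynomial.C (v i0) * Polynomial.X + Polynomial.C (A i0)).natDegree
          + ∑ i ∈ Finset.univ.erase i0, (Polynomial.C (v i) * Polynomial.X
            + Polynomial.C (A i)).natDegree := by
      rw [← Finset.add_sum_erase _ _ (Finset.mem_univ i0)]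
    rw [hsplit, hi0]
    simp only [map_zero, zero_mul, zero_add, Polynomial.natDegree_C, zero_add]
    calc ∑ i ∈ Finset.univ.erase i0, (Polynomial.C (v i) * Polynomial.X
            + Polynomial.C (A i)).natDegree
        ≤ ∑ i ∈ Finset.univ.erase i0, 1 := by
          apply Finset.sum_le_sum
          intro i _
          refine le_trans (Polynomial.natDegree_add_le _ _) (max_le ?_ ?_)
          · exact le_trans (Polynomial.natDegree_C_mul_le _ _) (by simp)
          · simp
      _ = k - 1 := by
          rw [Finset.sum_const, smul_eq_mul, mul_one, Finset.card_erase_of_mem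
            (Finset.mem_univ i0), Finset.card_univ, Fintype.card_fin]
  have hsum : ∑ t : ZMod (k + 1), Q.eval t = 0 := by
    have heval : ∀ t : ZMod (k + 1), Q.eval t
        = ∑ e ∈ Finset.range (Q.natDegree + 1), Q.coeff e * t ^ e := by
      intro t
      rw [Polynomial.eval_eq_sum_range]
    calc ∑ t : ZMod (k + 1), Q.eval t
        = ∑ t : ZMod (k + 1), ∑ e ∈ Finset.range (Q.natDegree + 1), Q.coeff e * t ^ e := by
          apply Finset.sum_congr rfl; intro t _; exact heval t
      _ = ∑ e ∈ Finset.range (Q.natDegree + 1), ∑ t : ZMod (k + 1), Q.coeff e * t ^ e :=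
          Finset.sum_comm
      _ = 0 := by
          apply Finset.sum_eq_zero
          intro e he
          rw [← Finset.mul_sum]
          have hlt : e < Fintype.card (ZMod (k + 1)) - 1 := by
            rw [ZMod.card]
            have := Finset.mem_range.mp he
            omega
          rw [FiniteField.sum_pow_lt_card_sub_one _ e hlt, mul_zero]
  -- counting
  set N : Finset (ZMod (k + 1)) := Finset.univ.filter (fun t => Q.eval t ≠ 0) with hN
  have hsum2 : ∑ t : ZMod (k + 1), Q.eval t = (N.card : ZMod (k + 1)) * (-1) := by
    rw [← Finset.sum_filter_ne_zero Finset.univ]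
    have : ∀ t ∈ N, Q.eval t = -1 := by
      intro t ht
      rw [hN, Finset.mem_filter] at ht
      rcases key t with hcase | hcase
      · exfalso
        obtain ⟨i, hi⟩ := hcase
        apply ht.2
        rw [hQeval]
        exact Finset.prod_eq_zero (Finset.mem_univ i) hi
      · rw [hQeval]; exact hcase
    rw [Finset.sum_congr rfl this, Finset.sum_const, nsmul_eq_mul]
  have hdvd : (k + 1) ∣ N.card := by
    rw [hsum] at hsum2
    have : (N.card : ZMod (k + 1)) = 0 := by
      have := hsum2.symm
      rw [mul_neg_one, neg_eq_zero] at this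
      exact this
    exact (ZMod.natCast_eq_zero_iff _ _).mp this
  have h0mem : (0 : ZMod (k + 1)) ∈ N := by
    rw [hN, Finset.mem_filter]
    refine ⟨Finset.mem_univ _, ?_⟩
    rw [hQeval]
    rw [Finset.prod_ne_zero_iff]
    intro i _
    simpa using hAne i
  have ht0 : (-(A j) * (v j)⁻¹) ∉ N := by
    rw [hN, Finset.mem_filter]
    rintro ⟨-, hne⟩
    apply hne
    rw [hQeval]
    apply Finset.prod_eq_zero (Finset.mem_univ j)
    rw [mul_assoc, inv_mul_cancel₀ hj, mul_one]
    ring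
  have hlt : N.card < k + 1 := by
    have hss : N ⊂ Finset.univ := by
      refine ⟨Finset.filter_subset _ _, fun hsub => ht0 (hsub (Finset.mem_univ _))⟩
    have := Finset.card_lt_card hss
    rwa [Finset.card_univ, ZMod.card] at this
  have hpos : 0 < N.card := Finset.card_pos.mpr ⟨0, h0mem⟩
  have := Nat.le_of_dvd hpos hdvd
  omega
end

section
/- Let p be a prime, k ≥ 3, G ⊆ (Z/(k+1))^*, with 1 ≤ |G| ≤ k. Define P(X) = ∏_{i=1}^k (c_i + X) for some constants c_i in Z/(k+1), and Q(X) = Σ_{m∈G} (1 - (X-m)^k). If P and Q agree on all of Z/(k+1) and both have degree at most k, then P = Q as polynomials; in particular comparing leading coefficients gives 1 ≡ -|G| (mod k+1), hence |G| = k. -/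
/-!
Both sides have degree at most `k` and agree on the `k + 1` points of the field `ZMod (k + 1)`,
so they are equal. Their coefficients of `X ^ k` are `1` (for the monic product) and `-|G|`,
so `|G| + 1 ≡ 0 (mod k + 1)`, which together with `|G| ≤ k` forces `|G| = k`.
-/

namespace Polynomial

lemma coeff_prod_X_add_C_card {R ι : Type*} [CommRing R] [Nontrivial R] [Fintype ι]
    (c : ι → R) : (∏ i, (X + C (c i))).coeff (Fintype.card ι) = 1 := by
  have hmonic : ∀ i ∈ Finset.univ, (X + C (c i)).Monic := fun i _ ↦ monic_X_add_C (c i)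
  have hdeg : (∏ i, (X + C (c i))).natDegree = Fintype.card ι := by
    simp [natDegree_prod_of_monic _ _ hmonic]
  rw [← hdeg]
  exact (monic_prod_of_monic _ _ hmonic).coeff_natDegree

lemma coeff_one_sub_X_sub_C_pow_self {R : Type*} [CommRing R] [Nontrivial R] (a : R) {n : ℕ}
    (hn : n ≠ 0) : (1 - (X - C a) ^ n).coeff n = -1 := by
  have hdeg : ((X - C a) ^ n).natDegree = n := by
    rw [(monic_X_sub_C a).natDegree_pow, natDegree_X_sub_C, mul_one]
  have hlead : ((X - C a) ^ n).coeff n = 1 := by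
    simpa only [hdeg] using ((monic_X_sub_C a).pow n).coeff_natDegree
  simp [coeff_one, hn, hlead]

end Polynomial

lemma ZMod.eq_of_one_eq_neg_natCast {m n : ℕ} (hmn : m ≤ n)
    (h : (1 : ZMod (n + 1)) = -(m : ZMod (n + 1))) : m = n := by
  have hzero : ((m + 1 : ℕ) : ZMod (n + 1)) = 0 := by
    push_cast
    linear_combination h
  have := Nat.le_of_dvd m.succ_pos ((ZMod.natCast_eq_zero_iff _ _).mp hzero)
  omega

open Polynomial in
theorem stmt_3_general (k : ℕ) (hp : Nat.Prime (k + 1))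
    (G : Finset (ZMod (k + 1))ˣ) (hGk : G.card ≤ k)
    (c : Fin k → ZMod (k + 1))
    (P Q : Polynomial (ZMod (k + 1)))
    (hP : P = ∏ i : Fin k, (X + C (c i)))
    (hQ : Q = ∑ m ∈ G, (1 - (X - C (m : ZMod (k + 1))) ^ k))
    (hagree : ∀ x : ZMod (k + 1), P.eval x = Q.eval x)
    (hdP : P.natDegree ≤ k) (hdQ : Q.natDegree ≤ k) :
    P = Q ∧ (1 : ZMod (k + 1)) = -(G.card : ZMod (k + 1)) ∧ G.card = k := by
  have : Fact (Nat.Prime (k + 1)) := ⟨hp⟩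
  have hPQ : P = Q := eq_of_natDegree_lt_card_of_eval_eq P Q Function.injective_id hagree
    (by rw [ZMod.card]; omega)
  have hPk : P.coeff k = 1 := by
    simpa [hP] using coeff_prod_X_add_C_card c
  have hQk : Q.coeff k = -(G.card : ZMod (k + 1)) := by
    have hk : k ≠ 0 := by have := hp.two_le; omega
    rw [hQ, finsetSum_coeff]
    simp only [coeff_one_sub_X_sub_C_pow_self _ hk, Finset.sum_neg_distrib, Finset.card_eq_sum_ones,
      Nat.cast_sum, Nat.cast_one]
  have hcard : (1 : ZMod (k + 1)) = -(G.card : ZMod (k + 1)) := by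
    rw [← hPk, hPQ, hQk]
  exact ⟨hPQ, hcard, ZMod.eq_of_one_eq_neg_natCast hGk hcard⟩

open Polynomial in
theorem stmt_3 (k : ℕ) (hk : 3 ≤ k) (hp : Nat.Prime (k + 1))
    (G : Finset (ZMod (k + 1))ˣ) (hG1 : 1 ≤ G.card) (hGk : G.card ≤ k)
    (c : Fin k → ZMod (k + 1))
    (P Q : Polynomial (ZMod (k + 1)))
    (hP : P = ∏ i : Fin k, (X + C (c i)))
    (hQ : Q = ∑ m ∈ G, (1 - (X - C (m : ZMod (k + 1))) ^ k))
    (hagree : ∀ x : ZMod (k + 1), P.eval x = Q.eval x)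
    (hdP : P.natDegree ≤ k) (hdQ : Q.natDegree ≤ k) :
    P = Q ∧ (1 : ZMod (k + 1)) = -(G.card : ZMod (k + 1)) ∧ G.card = k :=
  stmt_3_general k hp G hGk c P Q hP hQ hagree hdP hdQ
end

section
/- For a real number t and positive integer k, define r_k(t) to be the vector whose i-th coordinate is ⌊(k+1)·{i·t}⌋ for i = 1,...,k, where {x} is the fractional part. If k+1 is an odd prime, then for every nonzero v ∈ (Z/(k+1))^k having at least one zero coordinate, there exist s ∈ Z/(k+1) and an integer r such that every coordinate of s·v + r_k(r/(k+1)) (reduced mod k+1) lies in {1,...,k-1}. -/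
/-- The discretized position vector: i-th coordinate is ⌊(k+1)·{(i+1)·t}⌋. -/
noncomputable def rk (k : ℕ) (t : ℝ) : Fin k → ℤ :=
  fun i => ⌊((k : ℝ) + 1) * Int.fract ((((i : ℕ) : ℝ) + 1) * t)⌋

open Finset Polynomial

section Helpers

variable {p : ℕ} [Fact (Nat.Prime p)]

/-- Wilson: product of all nonzero elements of `ZMod p` is `-1`. -/
lemma prod_erase_zero_eq_neg_one :
    ∏ b ∈ Finset.univ.erase (0 : ZMod p), b = -1 := by
  rw [← ZMod.prod_Ico_one_prime (p := p)]
  refine Finset.prod_nbij ZMod.val ?_ ?_ ?_ ?_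
  · intro a ha
    have ha0 : a ≠ 0 := (Finset.mem_erase.mp ha).1
    rw [Finset.mem_Ico]
    constructor
    · have : a.val ≠ 0 := by simpa [ZMod.val_eq_zero] using ha0
      omega
    · exact ZMod.val_lt a
  · intro a _ b _ hab
    exact ZMod.val_injective _ hab
  · intro x hx
    rw [Finset.coe_Ico, Set.mem_Ico] at hx
    refine ⟨(x : ZMod p), ?_, ?_⟩
    · rw [Finset.mem_coe, Finset.mem_erase]
      refine ⟨?_, Finset.mem_univ _⟩
      intro h0
      rw [ZMod.natCast_eq_zero_iff] at h0
      exact absurd (Nat.le_of_dvd (by omega) h0) (by omega)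
    · exact ZMod.val_cast_of_lt hx.2
  · intro a _
    exact (ZMod.natCast_rightInverse a).symm

/-- Sum of `x ^ (p-1)` over all of `ZMod p` is `-1`. -/
lemma sum_pow_card_sub_one :
    ∑ x : ZMod p, x ^ (p - 1) = -1 := by
  have hp : 2 ≤ p := (Fact.out : p.Prime).two_le
  rw [← Finset.sum_erase_add _ _ (Finset.mem_univ (0 : ZMod p))]
  rw [zero_pow (by omega : p - 1 ≠ 0), add_zero]
  have h1 : ∀ x ∈ Finset.univ.erase (0 : ZMod p), x ^ (p - 1) = 1 := fun x hx =>
    ZMod.pow_card_sub_one_eq_one (Finset.mem_erase.mp hx).1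
  rw [Finset.sum_congr rfl h1, Finset.sum_const, Finset.card_erase_of_mem (Finset.mem_univ _),
    Finset.card_univ, ZMod.card, nsmul_eq_mul, mul_one]
  have : ((p - 1 : ℕ) : ZMod p) = (p : ZMod p) - 1 := by
    push_cast [Nat.cast_sub (by omega : 1 ≤ p)]; ring
  rw [this, ZMod.natCast_self, zero_sub]

/-- Summing a polynomial of degree `< p` over `ZMod p` picks minus the coefficient `p-1`. -/
lemma sum_eval_eq_neg_coeff (f : Polynomial (ZMod p)) (hf : f.natDegree < p) :
    ∑ x : ZMod p, f.eval x = - f.coeff (p - 1) := by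
  have hp : 2 ≤ p := (Fact.out : p.Prime).two_le
  have heval : ∀ x : ZMod p, f.eval x = ∑ j ∈ Finset.range p, f.coeff j * x ^ j :=
    fun x => Polynomial.eval_eq_sum_range' hf x
  rw [Finset.sum_congr rfl fun x _ => heval x, Finset.sum_comm]
  have hsplit : Finset.range p = Finset.range ((p - 1) + 1) := by
    congr 1; omega
  rw [hsplit, Finset.sum_range_succ]
  have h1 : ∀ j ∈ Finset.range (p - 1), (∑ x : ZMod p, f.coeff j * x ^ j) = 0 := by
    intro j hj
    rw [Finset.mem_range] at hj
    rw [← Finset.mul_sum,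
      FiniteField.sum_pow_lt_card_sub_one (K := ZMod p) j (by rw [ZMod.card]; omega), mul_zero]
  rw [Finset.sum_congr rfl h1, Finset.sum_const, smul_zero, zero_add, ← Finset.mul_sum,
    sum_pow_card_sub_one, mul_neg_one]

/-- The key abstract lemma: for any function `γ` on `ZMod p` taking at least two values
on nonzero inputs, there is an affine map `x ↦ s*x + r` with `s * γ b + r ∉ {0, b}`
for all nonzero `b`. -/
lemma main_lemma (heven : Even (p - 1)) (γ : ZMod p → ZMod p)
    (hd : ∃ b b' : ZMod p, b ≠ 0 ∧ b' ≠ 0 ∧ γ b ≠ γ b') :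
    ∃ s r : ZMod p, ∀ b : ZMod p, b ≠ 0 → s * γ b + r ≠ 0 ∧ s * γ b + r ≠ b := by
  have hp : 2 ≤ p := (Fact.out : p.Prime).two_le
  by_contra hcon
  push_neg at hcon
  set B : Finset (ZMod p) := Finset.univ.erase 0 with hB
  set Cs : Finset (ZMod p) := B.image γ with hCs
  have hmemB : ∀ b : ZMod p, b ∈ B ↔ b ≠ 0 := by intro b; simp [hB]
  have hγC : ∀ b : ZMod p, b ≠ 0 → γ b ∈ Cs := fun b hb =>
    Finset.mem_image_of_mem γ ((hmemB b).mpr hb)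
  have hcardB : B.card = p - 1 := by
    rw [hB, Finset.card_erase_of_mem (Finset.mem_univ _), Finset.card_univ, ZMod.card]
  have key : ∀ z : ZMod p, z ∉ Cs → ∏ b ∈ B, (γ b - z) = 1 := by
    intro z hz
    have hne : ∀ b ∈ B, γ b - z ≠ 0 := by
      intro b hb h0
      exact hz (by rw [← sub_eq_zero.mp h0]; exact hγC b ((hmemB b).mp hb))
    set θ : ZMod p → ZMod p := fun b => b * (γ b - z)⁻¹ with hθ
    have hsurj : B ⊆ B.image θ := by
      intro α hα
      have hα0 : α ≠ 0 := (hmemB α).mp hα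
      obtain ⟨b, hb0, himp⟩ := hcon α (-(α * z))
      have hbB : b ∈ B := (hmemB b).mpr hb0
      have hγbz : γ b - z ≠ 0 := hne b hbB
      have hne0 : α * γ b + -(α * z) ≠ 0 := by
        intro h0
        have hz0 : α * (γ b - z) = 0 := by linear_combination h0
        exact (mul_ne_zero hα0 hγbz) hz0
      have heq : α * γ b + -(α * z) = b := himp hne0
      have hθb : θ b = α := by
        show b * (γ b - z)⁻¹ = α
        have hb' : b = α * (γ b - z) := by linear_combination -heq
        apply mul_right_cancel₀ hγbz
        rw [mul_assoc, inv_mul_cancel₀ hγbz, mul_one]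
        exact hb'
      rw [← hθb]
      exact Finset.mem_image_of_mem θ hbB
    have himg : B.image θ = B := by
      apply Finset.Subset.antisymm _ hsurj
      intro x hx
      obtain ⟨b, hb, rfl⟩ := Finset.mem_image.mp hx
      rw [hmemB]
      exact mul_ne_zero ((hmemB b).mp hb) (inv_ne_zero (hne b hb))
    have hinj : Set.InjOn θ B := by
      rw [← Finset.card_image_iff, himg]
    have hprod : ∏ b ∈ B, θ b = ∏ b ∈ B, b := by
      conv_rhs => rw [← himg]
      rw [Finset.prod_image fun x hx y hy h => hinj hx hy h]
    have hW : (∏ b ∈ B, b) = -1 := prod_erase_zero_eq_neg_one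
    have h2 : (∏ b ∈ B, b) * (∏ b ∈ B, (γ b - z))⁻¹ = ∏ b ∈ B, b := by
      rw [← Finset.prod_inv_distrib, ← Finset.prod_mul_distrib]
      exact hprod
    have hWne : (∏ b ∈ B, b) ≠ 0 := by rw [hW]; simp
    have h3 : (∏ b ∈ B, (γ b - z))⁻¹ = 1 :=
      mul_left_cancel₀ hWne (h2.trans (mul_one _).symm)
    exact inv_eq_one.mp h3
  set P : Polynomial (ZMod p) := ∏ b ∈ B, (X - Polynomial.C (γ b)) with hP
  have hmonic : P.Monic := Polynomial.monic_prod_of_monic _ _ fun b _ => Polynomial.monic_X_sub_C _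
  have hdeg : P.natDegree = p - 1 := by
    rw [hP, Polynomial.natDegree_prod_of_monic _ _ fun b _ => Polynomial.monic_X_sub_C _]
    simp only [Polynomial.natDegree_X_sub_C]
    rw [Finset.sum_const, smul_eq_mul, mul_one, hcardB]
  have hevalC : ∀ z ∈ Cs, P.eval z = 0 := by
    intro z hz
    obtain ⟨b, hb, hbz⟩ := Finset.mem_image.mp hz
    rw [hP, Polynomial.eval_prod]
    exact Finset.prod_eq_zero hb
      (by rw [Polynomial.eval_sub, Polynomial.eval_X, Polynomial.eval_C, hbz, sub_self])
  have hevalN : ∀ z : ZMod p, z ∉ Cs → P.eval z = 1 := by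
    intro z hz
    rw [hP, Polynomial.eval_prod]
    have e1 : ∀ b ∈ B, Polynomial.eval z (X - Polynomial.C (γ b)) = -1 * (γ b - z) := by
      intro b _; rw [Polynomial.eval_sub, Polynomial.eval_X, Polynomial.eval_C]; ring
    rw [Finset.prod_congr rfl e1, Finset.prod_mul_distrib, Finset.prod_const, key z hz,
      hcardB, heven.neg_one_pow, mul_one]
  have hsum : ∑ x : ZMod p, P.eval x = ((p - Cs.card : ℕ) : ZMod p) := by
    rw [← Finset.sum_sdiff (Finset.subset_univ Cs)]
    have hA : ∑ x ∈ Cs, P.eval x = 0 := Finset.sum_eq_zero hevalC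
    have hBs : ∑ x ∈ Finset.univ \ Cs, P.eval x = (((Finset.univ \ Cs).card : ℕ) : ZMod p) := by
      rw [Finset.sum_congr rfl fun x hx => hevalN x (Finset.mem_sdiff.mp hx).2,
        Finset.sum_const, nsmul_eq_mul, mul_one]
    rw [hA, hBs, add_zero, Finset.card_sdiff_of_subset (Finset.subset_univ Cs), Finset.card_univ, ZMod.card]
  have hsum2 : ∑ x : ZMod p, P.eval x = -1 := by
    rw [sum_eval_eq_neg_coeff P (by rw [hdeg]; omega)]
    have hc := hmonic.coeff_natDegree
    rw [hdeg] at hc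
    rw [hc]
  have hcard_le : Cs.card ≤ p - 1 := le_trans Finset.card_image_le (le_of_eq hcardB)
  have hcard_ge : 2 ≤ Cs.card := by
    obtain ⟨b, b', hb, hb', hne⟩ := hd
    have : 1 < Cs.card := Finset.one_lt_card.mpr ⟨γ b, hγC b hb, γ b', hγC b' hb', hne⟩
    omega
  have hfin : ((p - Cs.card : ℕ) : ZMod p) = ((p - 1 : ℕ) : ZMod p) := by
    rw [← hsum, hsum2]
    push_cast [Nat.cast_sub (by omega : 1 ≤ p)]
    rw [ZMod.natCast_self]; ring
  rw [ZMod.natCast_eq_natCast_iff] at hfin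
  have h1 : p - Cs.card = p - 1 := by
    calc p - Cs.card = (p - Cs.card) % p := (Nat.mod_eq_of_lt (by omega)).symm
    _ = (p - 1) % p := hfin
    _ = p - 1 := Nat.mod_eq_of_lt (by omega)
  omega

end Helpers


lemma rk_cast (k : ℕ) (r : ℤ) (i : Fin k) :
    ((rk k ((r : ℝ) / ((k : ℝ) + 1)) i : ℤ) : ZMod (k + 1))
      = (((i : ℕ) + 1 : ℕ) : ZMod (k + 1)) * (r : ZMod (k + 1)) := by
  have hk : ((k : ℝ) + 1) = ((k + 1 : ℕ) : ℝ) := by push_cast; ring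
  set m : ℤ := (((i : ℕ) + 1 : ℕ) : ℤ) * r with hm
  have harg : (((i : ℕ) : ℝ) + 1) * ((r : ℝ) / ((k : ℝ) + 1)) = (m : ℝ) / ((k + 1 : ℕ) : ℝ) := by
    rw [hm]; push_cast; ring
  have hne : ((k + 1 : ℕ) : ℝ) ≠ 0 := by positivity
  have hfract : Int.fract ((((i : ℕ) : ℝ) + 1) * ((r : ℝ) / ((k : ℝ) + 1)))
      = ((m % (k + 1 : ℕ) : ℤ) : ℝ) / ((k + 1 : ℕ) : ℝ) := by
    rw [harg, Int.fract_div_intCast_eq_div_intCast_mod]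
  have hmul : ((k : ℝ) + 1) * (((m % (k + 1 : ℕ) : ℤ) : ℝ) / ((k + 1 : ℕ) : ℝ))
      = ((m % (k + 1 : ℕ) : ℤ) : ℝ) := by
    rw [hk]; field_simp
  show ((⌊((k : ℝ) + 1) * Int.fract ((((i : ℕ) : ℝ) + 1) * ((r : ℝ) / ((k : ℝ) + 1)))⌋ : ℤ)
      : ZMod (k + 1)) = _
  rw [hfract, hmul, Int.floor_intCast, ZMod.intCast_mod m (k + 1), hm]
  push_cast
  ring

theorem stmt_4 (k : ℕ) (hp : Nat.Prime (k + 1)) (hodd : Odd (k + 1))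
    (v : Fin k → ZMod (k + 1)) (hv : v ≠ 0) (hz : ∃ i, v i = 0) :
    ∃ (s : ZMod (k + 1)) (r : ℤ), ∀ i : Fin k,
      1 ≤ (s * v i + ((rk k ((r : ℝ) / ((k : ℝ) + 1)) i : ℤ) : ZMod (k + 1))).val ∧
      (s * v i + ((rk k ((r : ℝ) / ((k : ℝ) + 1)) i : ℤ) : ZMod (k + 1))).val ≤ k - 1 := by
  haveI : Fact (Nat.Prime (k + 1)) := ⟨hp⟩
  have hk2 : 2 ≤ k := by
    by_contra h
    push_neg at h
    interval_cases k
    · exact absurd hp (by decide)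
    · exact absurd hodd (by decide)
  have heven : Even ((k + 1) - 1) := Nat.Odd.sub_odd hodd odd_one
  have hvalne : ∀ x : ZMod (k + 1), x ≠ 0 → x.val - 1 < k := by
    intro x hx
    have h1 := ZMod.val_lt x
    have h2 : x.val ≠ 0 := by simpa [ZMod.val_eq_zero] using hx
    omega
  let w : ZMod (k + 1) → ZMod (k + 1) :=
    fun x => if hx : x = 0 then 0 else v ⟨x.val - 1, hvalne x hx⟩
  have hacast : ∀ i : Fin k, ((((i : ℕ) + 1 : ℕ)) : ZMod (k + 1)).val = (i : ℕ) + 1 := by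
    intro i
    exact ZMod.val_cast_of_lt (by omega)
  have hane : ∀ i : Fin k, ((((i : ℕ) + 1 : ℕ)) : ZMod (k + 1)) ≠ 0 := by
    intro i h0
    have := hacast i
    rw [h0, ZMod.val_zero] at this
    omega
  have hw : ∀ i : Fin k, w ((((i : ℕ) + 1 : ℕ)) : ZMod (k + 1)) = v i := by
    intro i
    have hfin : ∀ (h : ((((i : ℕ) + 1 : ℕ)) : ZMod (k + 1)).val - 1 < k),
        (⟨((((i : ℕ) + 1 : ℕ)) : ZMod (k + 1)).val - 1, h⟩ : Fin k) = i := by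
      intro h
      apply Fin.ext
      show ((((i : ℕ) + 1 : ℕ)) : ZMod (k + 1)).val - 1 = (i : ℕ)
      rw [hacast i]
      omega
    simp only [w, dif_neg (hane i), hfin]
  let γ : ZMod (k + 1) → ZMod (k + 1) := fun b => w (-b⁻¹) * (-b)
  have hbne : ∀ i : Fin k, -((((i : ℕ) + 1 : ℕ)) : ZMod (k + 1))⁻¹ ≠ 0 := by
    intro i
    exact neg_ne_zero.mpr (inv_ne_zero (hane i))
  have hγ : ∀ i : Fin k,
      γ (-((((i : ℕ) + 1 : ℕ)) : ZMod (k + 1))⁻¹)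
        = v i * ((((i : ℕ) + 1 : ℕ)) : ZMod (k + 1))⁻¹ := by
    intro i
    set a : ZMod (k + 1) := ((((i : ℕ) + 1 : ℕ)) : ZMod (k + 1)) with hadef
    have h1 : -(-a⁻¹)⁻¹ = a := by
      rw [inv_neg, inv_inv, neg_neg]
    have h2 : -(-a⁻¹) = a⁻¹ := neg_neg _
    show w (-(-a⁻¹)⁻¹) * (-(-a⁻¹)) = v i * a⁻¹
    rw [h1, h2, hw i]
  -- two values
  obtain ⟨i0, hi0⟩ := hz
  obtain ⟨i1, hi1⟩ := Function.ne_iff.mp hv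
  have hγ0 : γ (-((((i0 : ℕ) + 1 : ℕ)) : ZMod (k + 1))⁻¹) = 0 := by
    rw [hγ i0, hi0, zero_mul]
  have hγ1 : γ (-((((i1 : ℕ) + 1 : ℕ)) : ZMod (k + 1))⁻¹) ≠ 0 := by
    rw [hγ i1]
    exact mul_ne_zero hi1 (inv_ne_zero (hane i1))
  obtain ⟨s, r, hsr⟩ := main_lemma (p := k + 1) heven γ
    ⟨_, _, hbne i0, hbne i1, by rw [hγ0]; exact fun h => hγ1 h.symm⟩
  refine ⟨s, (r.val : ℤ), ?_⟩
  intro i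
  set a : ZMod (k + 1) := ((((i : ℕ) + 1 : ℕ)) : ZMod (k + 1)) with hadef
  have ha : a ≠ 0 := hane i
  have hcast : ((rk k (((r.val : ℤ) : ℝ) / ((k : ℝ) + 1)) i : ℤ) : ZMod (k + 1)) = a * r := by
    rw [rk_cast k ((r.val : ℤ)) i]
    congr 1
    push_cast
    exact ZMod.natCast_rightInverse r
  obtain ⟨h1, h2⟩ := hsr (-a⁻¹) (hbne i)
  rw [hγ i] at h1 h2
  have hkey : a * (s * (v i * a⁻¹) + r) = s * v i + a * r := by
    field_simp
  have hy0 : s * v i + a * r ≠ 0 := by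
    rw [← hkey]
    exact mul_ne_zero ha h1
  have hym : s * v i + a * r ≠ -1 := by
    intro hy1
    apply h2
    have hXa : a * (s * (v i * a⁻¹) + r) = -1 := by rw [hkey]; exact hy1
    apply mul_left_cancel₀ ha
    rw [hXa, mul_neg, mul_inv_cancel₀ ha]
  simp only [hcast]
  set y : ZMod (k + 1) := s * v i + a * r with hydef
  constructor
  · have : y.val ≠ 0 := by simpa [ZMod.val_eq_zero] using hy0
    omega
  · have hvlt : y.val < k + 1 := ZMod.val_lt y
    have hvk : y.val ≠ k := by
      intro hk
      apply hym
      have hyk : y = ((k : ℕ) : ZMod (k + 1)) := by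
        have h' : ((y.val : ℕ) : ZMod (k + 1)) = ((k : ℕ) : ZMod (k + 1)) :=
          congrArg (Nat.cast : ℕ → ZMod (k + 1)) hk
        rw [← h']
        exact (ZMod.natCast_rightInverse y).symm
      have hkm : ((k : ℕ) : ZMod (k + 1)) = -1 := by
        have : ((k : ℕ) : ZMod (k + 1)) + 1 = 0 := by
          have : (((k + 1 : ℕ)) : ZMod (k + 1)) = 0 := ZMod.natCast_self (k + 1)
          push_cast at this
          exact this
        linear_combination this
      rw [hyk, hkm]
    omega
end

section
/- Fix k ≥ 1 and let r_k(t) = (⌊(k+1){t}⌋, ..., ⌊(k+1){k·t}⌋). The function r_k is piecewise constant, and any two consecutive discontinuities of r_k are at distance at least 1/(k(k+1)); consequently, if p > k(k+1) then r_k((1/(k+1))·Z) ⊆ r_k((1/p)·Z), i.e. every value attained by r_k at a rational with denominator k+1 is also attained at some rational with denominator p. -/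
theorem Int.floor_natCast_mul_fract {F : Type*} [Field F] [LinearOrder F] [IsStrictOrderedRing F]
    [FloorRing F] (K : ℕ) (x : F) : ⌊(K : F) * Int.fract x⌋ = ⌊K * x⌋ % K := by
  rcases Nat.eq_zero_or_pos K with rfl | hK
  · simp
  have hx : ⌊x⌋ = ⌊K * x⌋ / K := by
    rw [← Int.floor_div_natCast, mul_div_cancel_left₀ x (by positivity)]
  rw [Int.fract, mul_sub, ← Int.cast_natCast K, ← Int.cast_mul, Int.floor_sub_intCast,
    Int.emod_def, hx]
  push_cast
  ring_nf

theorem exists_intCast_div_mem_Ico {p : ℕ} (hp : 0 < p) (c : ℝ) :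
    ∃ m : ℤ, (m : ℝ) / p ∈ Set.Ico c (c + 1 / p) := by
  have hp' : (0 : ℝ) < p := by exact_mod_cast hp
  refine ⟨⌈c * p⌉, ?_, ?_⟩
  · rw [le_div_iff₀ hp']
    exact Int.le_ceil _
  · rw [div_lt_iff₀ hp', add_mul, one_div_mul_cancel hp'.ne']
    exact Int.ceil_lt_add_one _

namespace rk

theorem apply_eq_floor_emod (k : ℕ) (t : ℝ) (i : Fin k) :
    rk k t i = ⌊((k + 1 : ℕ) : ℝ) * ((i + 1 : ℕ) * t)⌋ % (k + 1 : ℕ) := by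
  have := Int.floor_natCast_mul_fract (k + 1) ((i + 1 : ℕ) * t)
  push_cast at this ⊢
  exact this

theorem floor_mul_eq {k : ℕ} (i : Fin k) (n : ℤ) {t : ℝ}
    (ht : t ∈ Set.Ico ((n : ℝ) / (k + 1)) ((n : ℝ) / (k + 1) + 1 / (k * (k + 1)))) :
    ⌊((k + 1 : ℕ) : ℝ) * ((i + 1 : ℕ) * t)⌋ = (i + 1 : ℕ) * n := by
  obtain ⟨h₀, h₁⟩ := ht
  have hk : (0 : ℝ) < k := by exact_mod_cast i.pos
  have hi : ((i + 1 : ℕ) : ℝ) ≤ k := by exact_mod_cast i.isLt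
  set d := t - n / (k + 1) with hd
  have hd₀ : 0 ≤ d := sub_nonneg.2 h₀
  have hd₁ : k * (k + 1) * d < 1 :=
    (lt_div_iff₀' (by positivity)).1 (by linarith)
  have hsplit : ((k + 1 : ℕ) : ℝ) * ((i + 1 : ℕ) * t) =
      ((i + 1 : ℕ) * n : ℤ) + (k + 1) * (i + 1 : ℕ) * d := by
    rw [hd]; push_cast; field_simp; ring
  rw [hsplit, Int.floor_intCast_add, add_eq_left, Int.floor_eq_zero_iff]
  constructor
  · positivity
  · calc (k + 1) * ((i + 1 : ℕ) : ℝ) * d ≤ k * (k + 1) * d := by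
          rw [mul_comm (k : ℝ)]; gcongr
      _ < 1 := hd₁

theorem eq_of_mem_Ico {k : ℕ} (n : ℤ) {t : ℝ}
    (ht : t ∈ Set.Ico ((n : ℝ) / (k + 1)) ((n : ℝ) / (k + 1) + 1 / (k * (k + 1)))) :
    rk k t = rk k ((n : ℝ) / (k + 1)) := by
  funext i
  have hk : (0 : ℝ) < k := by exact_mod_cast i.pos
  have hc := Set.left_mem_Ico.2 (lt_add_of_pos_right ((n : ℝ) / (k + 1))
    (one_div_pos.2 (by positivity : (0 : ℝ) < k * (k + 1))))
  rw [apply_eq_floor_emod, apply_eq_floor_emod, floor_mul_eq i n ht, floor_mul_eq i n hc]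

end rk

theorem stmt_6 (k : ℕ) (hk : 1 ≤ k) :
    (∀ (n : ℤ) (t : ℝ), (n : ℝ) / ((k : ℝ) + 1) ≤ t →
        t < (n : ℝ) / ((k : ℝ) + 1) + 1 / ((k : ℝ) * ((k : ℝ) + 1)) →
        rk k t = rk k ((n : ℝ) / ((k : ℝ) + 1))) ∧
    (∀ p : ℕ, (p : ℝ) > (k : ℝ) * ((k : ℝ) + 1) →
      ∀ n : ℤ, ∃ m : ℤ, rk k ((n : ℝ) / ((k : ℝ) + 1)) = rk k ((m : ℝ) / (p : ℝ))) := by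
  refine ⟨fun n t h₀ h₁ => rk.eq_of_mem_Ico n ⟨h₀, h₁⟩, fun p hp n => ?_⟩
  have hkk : (0 : ℝ) < k * (k + 1) := by
    have : (1 : ℝ) ≤ k := by exact_mod_cast hk
    positivity
  obtain ⟨m, hm₀, hm₁⟩ :=
    exists_intCast_div_mem_Ico (p := p) (by exact_mod_cast hkk.trans hp) ((n : ℝ) / (k + 1))
  have hpk : 1 / (p : ℝ) < 1 / (k * (k + 1)) := one_div_lt_one_div_of_lt hkk hp
  exact ⟨m, (rk.eq_of_mem_Ico n ⟨hm₀, hm₁.trans (by linarith)⟩).symm⟩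
end

section
/- Let k+1 and p > k(k+1) be odd primes. For every nonzero v ∈ (Z/(k+1))^k with at least one zero coordinate, there exist s ∈ Z/(k+1) and an integer r such that every coordinate of s·v + r_k(r/p) (reduced mod k+1) lies in {1,...,k-1}. -/
open Polynomial Finset

/-- Sum of evaluations of a low-degree polynomial over `ZMod q` vanishes. -/
lemma sum_eval_eq_zero {q : ℕ} [Fact (Nat.Prime q)] (P : Polynomial (ZMod q))
    (hdeg : P.natDegree < q - 1) : ∑ x : ZMod q, P.eval x = 0 := by
  have hcard : Fintype.card (ZMod q) = q := ZMod.card q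
  calc ∑ x : ZMod q, P.eval x
      = ∑ x : ZMod q, ∑ m ∈ Finset.range (P.natDegree + 1), P.coeff m * x ^ m := by
        refine Finset.sum_congr rfl fun x _ => ?_
        rw [Polynomial.eval_eq_sum_range]
    _ = ∑ m ∈ Finset.range (P.natDegree + 1), ∑ x : ZMod q, P.coeff m * x ^ m :=
        Finset.sum_comm
    _ = 0 := by
        refine Finset.sum_eq_zero fun m hm => ?_
        rw [← Finset.mul_sum, FiniteField.sum_pow_lt_card_sub_one (ZMod q) m ?_, mul_zero]
        rw [hcard]
        simp only [Finset.mem_range] at hm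
        omega

/-- The key finite-field lemma. -/
lemma exists_good_pair {k : ℕ} [Fact (Nat.Prime (k + 1))] (v : Fin k → ZMod (k + 1))
    (j1 : Fin k) (hj1 : v j1 ≠ 0) (j0 : Fin k) (hj0 : v j0 = 0) :
    ∃ s b : ZMod (k + 1), b ≠ 0 ∧ ∀ i : Fin k,
      v i * s + (((i : ℕ) + 1 : ℕ) : ZMod (k + 1)) ≠ 0 ∧
      v i * s + (((i : ℕ) + 1 : ℕ) : ZMod (k + 1)) ≠ b := by
  have hk1 : 1 ≤ k := j0.pos
  set c : Fin k → (ZMod (k + 1)) := fun i => (((i : ℕ) + 1 : ℕ) : (ZMod (k + 1))) with hc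
  set P : Polynomial (ZMod (k + 1)) := ∏ i : Fin k, (Polynomial.C (v i) * Polynomial.X + Polynomial.C (c i))
    with hP
  have heval : ∀ x : (ZMod (k + 1)), P.eval x = ∏ i : Fin k, (v i * x + c i) := by
    intro x
    rw [hP, Polynomial.eval_prod]
    refine Finset.prod_congr rfl fun i _ => ?_
    simp
  -- product of the constants is -1 by Wilson
  have hprodc : ∏ i : Fin k, c i = -1 := by
    have h1 : ∏ i : Fin k, c i = ((Nat.factorial k : ℕ) : (ZMod (k + 1))) := by
      rw [← Finset.prod_range_add_one_eq_factorial, Nat.cast_prod]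
      exact Fin.prod_univ_eq_prod_range (fun m => ((m + 1 : ℕ) : (ZMod (k + 1)))) k
    rw [h1]
    have := ZMod.wilsons_lemma (p := k + 1)
    simpa using this
  -- degree bound
  have hdeg : P.natDegree < (k + 1) - 1 := by
    have hsplit : P = (∏ i ∈ Finset.univ.erase j0,
        (Polynomial.C (v i) * Polynomial.X + Polynomial.C (c i))) *
        (Polynomial.C (v j0) * Polynomial.X + Polynomial.C (c j0)) :=
      (Finset.prod_erase_mul _ _ (Finset.mem_univ j0)).symm
    have hj0' : Polynomial.C (v j0) * Polynomial.X + Polynomial.C (c j0)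
        = Polynomial.C (c j0) := by
      rw [hj0, map_zero, zero_mul, zero_add]
    have h1 : P.natDegree ≤ (∏ i ∈ Finset.univ.erase j0,
        (Polynomial.C (v i) * Polynomial.X + Polynomial.C (c i))).natDegree := by
      rw [hsplit, hj0']
      refine le_trans (Polynomial.natDegree_mul_le) ?_
      simp [Polynomial.natDegree_C]
    have h2 : (∏ i ∈ Finset.univ.erase j0,
        (Polynomial.C (v i) * Polynomial.X + Polynomial.C (c i))).natDegree
        ≤ ∑ i ∈ Finset.univ.erase j0, 1 := by
      refine le_trans (Polynomial.natDegree_prod_le _ _) ?_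
      refine Finset.sum_le_sum fun i _ => ?_
      refine le_trans (Polynomial.natDegree_add_le _ _) ?_
      simp only [Polynomial.natDegree_C, max_le_iff]
      constructor
      · exact le_trans (Polynomial.natDegree_mul_le)
          (by simp [Polynomial.natDegree_C, Polynomial.natDegree_X])
      · omega
    have h3 : ∑ i ∈ Finset.univ.erase j0, 1 = k - 1 := by
      rw [Finset.sum_const, smul_eq_mul, mul_one, Finset.card_erase_of_mem (Finset.mem_univ j0)]
      simp
    omega
  -- find s with P.eval s ∉ {0, -1}
  have key : ∃ s : (ZMod (k + 1)), P.eval s ≠ 0 ∧ P.eval s ≠ -1 := by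
    by_contra hcon
    push_neg at hcon
    set S := Finset.univ.filter (fun x : (ZMod (k + 1)) => P.eval x = -1) with hS
    have hsum : ∑ x : (ZMod (k + 1)), P.eval x = 0 := sum_eval_eq_zero P hdeg
    have hsplit := (Finset.sum_filter_add_sum_filter_not Finset.univ
      (fun x : (ZMod (k + 1)) => P.eval x = -1) (fun x => P.eval x)).symm
    have h1 : ∑ x ∈ S, P.eval x = -(S.card : (ZMod (k + 1))) := by
      rw [Finset.sum_congr rfl (fun x hx => (Finset.mem_filter.mp hx).2)]
      simp
      rfl
    have h2 : ∑ x ∈ Finset.univ.filter (fun x : (ZMod (k + 1)) => ¬ P.eval x = -1), P.eval x = 0 := by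
      refine Finset.sum_eq_zero fun x hx => ?_
      have hx2 := (Finset.mem_filter.mp hx).2
      by_contra h0
      exact hx2 (hcon x h0)
    have hcards : (S.card : (ZMod (k + 1))) = 0 := by
      have := hsum
      rw [hsplit, h1, h2, add_zero] at this
      linear_combination -this
    have hdvd : (k + 1) ∣ S.card := (ZMod.natCast_eq_zero_iff _ _).mp hcards
    have h0mem : (0 : (ZMod (k + 1))) ∈ S := by
      rw [hS, Finset.mem_filter]
      refine ⟨Finset.mem_univ _, ?_⟩
      rw [heval]
      simpa using hprodc
    have hx₁ : P.eval (-(c j1) * (v j1)⁻¹) = 0 := by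
      rw [heval]
      refine Finset.prod_eq_zero (Finset.mem_univ j1) ?_
      have hinv : v j1 * (v j1)⁻¹ = 1 := mul_inv_cancel₀ hj1
      calc v j1 * (-(c j1) * (v j1)⁻¹) + c j1
          = -(c j1) * (v j1 * (v j1)⁻¹) + c j1 := by ring
        _ = 0 := by rw [hinv]; ring
    have hx₁S : (-(c j1) * (v j1)⁻¹) ∉ S := by
      haveI : Fact (1 < k + 1) := ⟨(Fact.out : Nat.Prime (k + 1)).one_lt⟩
      rw [hS, Finset.mem_filter]
      intro h
      rw [hx₁] at h
      have h2 := h.2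
      have h3 : (1 : ZMod (k + 1)) = 0 := by linear_combination h2
      exact one_ne_zero h3
    have hsub : S ⊆ Finset.univ.erase (-(c j1) * (v j1)⁻¹) := by
      intro x hx
      refine Finset.mem_erase.mpr ⟨?_, Finset.mem_univ x⟩
      intro h
      exact hx₁S (h ▸ hx)
    have hcard_le : S.card ≤ k := by
      have h4 := Finset.card_le_card hsub
      rwa [Finset.card_erase_of_mem (Finset.mem_univ _), Finset.card_univ, ZMod.card] at h4
    have hcard_ge : 1 ≤ S.card := Finset.card_pos.mpr ⟨0, h0mem⟩
    have := Nat.le_of_dvd (by omega) hdvd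
    omega
  obtain ⟨s, hs0, hs1⟩ := key
  set g : Fin k → (ZMod (k + 1)) := fun i => v i * s + c i with hg
  have hgeval : P.eval s = ∏ i : Fin k, g i := heval s
  have hg0 : ∀ i, g i ≠ 0 := by
    intro i h
    exact hs0 (by rw [hgeval]; exact Finset.prod_eq_zero (Finset.mem_univ i) h)
  -- c misses 0 and is injective; its image is univ.erase 0 with product -1
  have hcne : ∀ i, c i ≠ 0 := by
    intro i h
    rw [hc] at h
    have := (ZMod.natCast_eq_zero_iff _ _).mp h
    have := Nat.le_of_dvd (by omega) this
    have := i.isLt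
    omega
  have hcinj : Function.Injective c := by
    intro i i' h
    have h1 := congrArg ZMod.val h
    rw [hc] at h1
    simp only [ZMod.val_natCast] at h1
    have hi := i.isLt
    have hi' := i'.isLt
    rw [Nat.mod_eq_of_lt (by omega), Nat.mod_eq_of_lt (by omega)] at h1
    exact Fin.ext (by omega)
  have himgc : Finset.univ.image c = Finset.univ.erase (0 : (ZMod (k + 1))) := by
    refine Finset.eq_of_subset_of_card_le ?_ ?_
    · intro x hx
      obtain ⟨i, _, hi⟩ := Finset.mem_image.mp hx
      exact Finset.mem_erase.mpr ⟨hi ▸ hcne i, Finset.mem_univ x⟩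
    · rw [Finset.card_erase_of_mem (Finset.mem_univ _), Finset.card_univ, ZMod.card,
        Finset.card_image_of_injective _ hcinj, Finset.card_univ, Fintype.card_fin]
      omega
  have hprod_erase : ∏ x ∈ Finset.univ.erase (0 : (ZMod (k + 1))), x = -1 := by
    rw [← himgc, Finset.prod_image (fun i _ i' _ h => hcinj h)]
    exact hprodc
  -- the image of g cannot be all of (ZMod (k + 1)) \ {0}
  have hb : ∃ b : (ZMod (k + 1)), b ≠ 0 ∧ ∀ i, g i ≠ b := by
    by_contra hcon
    push_neg at hcon
    have himg : Finset.univ.erase (0 : (ZMod (k + 1))) ⊆ Finset.univ.image g := by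
      intro b hbm
      obtain ⟨i, hi⟩ := hcon b (Finset.mem_erase.mp hbm).1
      exact Finset.mem_image.mpr ⟨i, Finset.mem_univ i, hi⟩
    have hcard : (Finset.univ.image g).card ≤ k := by
      refine le_trans Finset.card_image_le ?_
      simp
    have heq : Finset.univ.erase (0 : (ZMod (k + 1))) = Finset.univ.image g := by
      refine Finset.eq_of_subset_of_card_le himg ?_
      rw [Finset.card_erase_of_mem (Finset.mem_univ _), Finset.card_univ, ZMod.card]
      omega
    have hinj : Set.InjOn g (Finset.univ : Finset (Fin k)) := by
      rw [← Finset.card_image_iff]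
      rw [← heq, Finset.card_erase_of_mem (Finset.mem_univ _), Finset.card_univ, ZMod.card,
        Finset.card_univ, Fintype.card_fin]
      omega
    have : ∏ i : Fin k, g i = ∏ x ∈ Finset.univ.image g, x := by
      rw [Finset.prod_image (fun i hi i' hi' h => hinj hi hi' h)]
    rw [← heq, hprod_erase] at this
    exact hs1 (hgeval.trans this)
  obtain ⟨b, hbne, hball⟩ := hb
  exact ⟨s, b, hbne, fun i => ⟨hg0 i, hball i⟩⟩

/-- Computation of `rk` at `r/p` for `r = ⌈a₀ p/(k+1)⌉`. -/
lemma rk_eq (k p a₀ : ℕ) (hk : 1 ≤ k) (hp : k * (k + 1) < p)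
    (hmod : a₀ * p % (k + 1) ≠ 0) (ha2 : a₀ ≤ k) (i : Fin k) :
    rk k (((a₀ * p / (k + 1) + 1 : ℕ) : ℝ) / (p : ℝ)) i
      = ((((i : ℕ) + 1) * a₀ % (k + 1) : ℕ) : ℤ) := by
  have hppos : 0 < p := by nlinarith
  set q := k + 1 with hq
  set j := (i : ℕ) + 1 with hjdef
  have hjk : j ≤ k := i.isLt
  set d := a₀ * p / q with hd
  set rn := d + 1 with hrn
  set md := a₀ * p % q with hmd
  have hdm : q * d + md = a₀ * p := Nat.div_add_mod _ _
  have hmdlt : md < q := Nat.mod_lt _ (by omega)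
  have hmdpos : 1 ≤ md := Nat.one_le_iff_ne_zero.mpr hmod
  set e := q - md with he
  have he1 : 1 ≤ e := by omega
  have he2 : e ≤ k := by omega
  have hE : q * rn = a₀ * p + e := by
    calc q * rn = q * d + q := by rw [hrn, Nat.mul_succ]
      _ = q * d + (md + e) := by rw [show md + e = q by omega]
      _ = (q * d + md) + e := by ring
      _ = a₀ * p + e := by rw [hdm]
  set c := j * a₀ % q with hcdef
  set m := j * a₀ / q with hmdef
  have hjm : q * m + c = j * a₀ := Nat.div_add_mod _ _
  have hclt : c < q := Nat.mod_lt _ (by omega)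
  have h3 : q * (j * rn) = q * (m * p) + (c * p + j * e) := by
    calc q * (j * rn) = j * (q * rn) := by ring
      _ = j * (a₀ * p + e) := by rw [hE]
      _ = (j * a₀) * p + j * e := by ring
      _ = (q * m + c) * p + j * e := by rw [hjm]
      _ = q * (m * p) + (c * p + j * e) := by ring
  have hjep : j * e < p := by
    calc j * e ≤ k * k := Nat.mul_le_mul hjk he2
      _ ≤ k * (k + 1) := Nat.mul_le_mul_left _ (by omega)
      _ < p := hp
  have hcpje : c * p + j * e < q * p := by
    have h4 : c * p ≤ k * p := Nat.mul_le_mul_right _ (by omega)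
    calc c * p + j * e < k * p + p := Nat.add_lt_add_of_le_of_lt h4 hjep
      _ = q * p := by rw [hq]; ring
  have hge : m * p ≤ j * rn := by
    refine Nat.le_of_mul_le_mul_left ?_ (show 0 < q by omega)
    omega
  set y := j * rn - m * p with hy
  have hyadd : j * rn = m * p + y := by omega
  have hyq : q * y = c * p + j * e := by
    have h5 : q * (j * rn) = q * (m * p) + q * y := by
      rw [hyadd, Nat.mul_add]
    omega
  have hylt : y < p := by
    refine Nat.lt_of_mul_lt_mul_left (a := q) ?_
    omega
  have hmodp : (j * rn) % p = y := by
    rw [hyadd, Nat.add_comm, Nat.add_mul_mod_self_right, Nat.mod_eq_of_lt hylt]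
  -- now the real computation
  show ⌊((k : ℝ) + 1) * Int.fract ((((i : ℕ) : ℝ) + 1) * (((rn : ℕ) : ℝ) / (p : ℝ)))⌋
      = ((c : ℕ) : ℤ)
  have hfr : (((i : ℕ) : ℝ) + 1) * (((rn : ℕ) : ℝ) / (p : ℝ))
      = ((j * rn : ℕ) : ℝ) / (p : ℝ) := by
    push_cast [hjdef]
    ring
  rw [hfr, Int.fract_div_natCast_eq_div_natCast_mod, hmodp]
  have hp0 : (0 : ℝ) < (p : ℝ) := by exact_mod_cast hppos
  have hcast : ((k : ℝ) + 1) * ((y : ℕ) : ℝ) = ((c : ℕ) : ℝ) * (p : ℝ) + ((j * e : ℕ) : ℝ) := by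
    have : ((q * y : ℕ) : ℝ) = ((c * p + j * e : ℕ) : ℝ) := congrArg (fun n : ℕ => (n : ℝ)) hyq
    push_cast at this ⊢
    rw [hq] at this
    push_cast at this
    linarith
  have hval : ((k : ℝ) + 1) * (((y : ℕ) : ℝ) / (p : ℝ))
      = ((c : ℕ) : ℝ) + ((j * e : ℕ) : ℝ) / (p : ℝ) := by
    rw [mul_div_assoc', hcast, add_div, mul_div_cancel_right₀ _ hp0.ne']
  rw [hval]
  have h0le : (0 : ℝ) ≤ ((j * e : ℕ) : ℝ) / (p : ℝ) := by positivity
  have hlt1 : ((j * e : ℕ) : ℝ) / (p : ℝ) < 1 := by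
    rw [div_lt_one hp0]
    exact_mod_cast hjep
  rw [Int.floor_eq_iff]
  constructor
  · push_cast at h0le hlt1 ⊢
    linarith
  · push_cast at h0le hlt1 ⊢
    linarith

theorem stmt_7 (k p : ℕ) (hp : Nat.Prime (k + 1)) (hodd : Odd (k + 1))
    (hpp : Nat.Prime p) (hpodd : Odd p) (hplarge : p > k * (k + 1))
    (v : Fin k → ZMod (k + 1)) (hv : v ≠ 0) (hz : ∃ i, v i = 0) :
    ∃ (s : ZMod (k + 1)) (r : ℤ), ∀ i : Fin k,
      1 ≤ (s * v i + ((rk k ((r : ℝ) / (p : ℝ)) i : ℤ) : ZMod (k + 1))).val ∧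
      (s * v i + ((rk k ((r : ℝ) / (p : ℝ)) i : ℤ) : ZMod (k + 1))).val ≤ k - 1 := by
  haveI : Fact (Nat.Prime (k + 1)) := ⟨hp⟩
  obtain ⟨j1, hj1⟩ := Function.ne_iff.mp hv
  obtain ⟨j0, hj0⟩ := hz
  have hj1' : v j1 ≠ 0 := hj1
  have hk1 : 1 ≤ k := j0.pos
  obtain ⟨s, b, hbne, hgood⟩ := exists_good_pair v j1 hj1' j0 hj0
  set a : ZMod (k + 1) := -b⁻¹ with ha
  have ha0 : a ≠ 0 := neg_ne_zero.mpr (inv_ne_zero hbne)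
  set a₀ := a.val with ha₀
  have ha₀1 : 1 ≤ a₀ := by
    rw [Nat.one_le_iff_ne_zero]
    intro h
    exact ha0 ((ZMod.val_eq_zero a).mp h)
  have ha₀2 : a₀ ≤ k := by
    have := ZMod.val_lt a
    omega
  have hacast : ((a₀ : ℕ) : (ZMod (k + 1))) = a := by
    rw [ha₀, ZMod.natCast_val, ZMod.cast_id]
  have hab : a * b = -1 := by
    rw [ha]
    field_simp
  -- divisibility fact
  have hmod : a₀ * p % (k + 1) ≠ 0 := by
    intro h
    have hdvd : (k + 1) ∣ a₀ * p := Nat.dvd_of_mod_eq_zero h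
    rcases (Nat.Prime.dvd_mul hp).mp hdvd with h1 | h2
    · have := Nat.le_of_dvd (by omega) h1
      omega
    · have h8 := (Nat.prime_dvd_prime_iff_eq hp hpp).mp h2
      have h7 : k + 1 ≤ k * (k + 1) := Nat.le_mul_of_pos_left _ (by omega)
      omega
  set rn : ℕ := a₀ * p / (k + 1) + 1 with hrn
  refine ⟨a * s, (rn : ℤ), fun i => ?_⟩
  have hrk : rk k ((((rn : ℕ) : ℤ) : ℝ) / (p : ℝ)) i
      = ((((i : ℕ) + 1) * a₀ % (k + 1) : ℕ) : ℤ) := by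
    rw [Int.cast_natCast]
    exact rk_eq k p a₀ hk1 hplarge hmod ha₀2 i
  rw [hrk]
  have hcastz : (((((i : ℕ) + 1) * a₀ % (k + 1) : ℕ) : ℤ) : (ZMod (k + 1)))
      = (((i : ℕ) + 1 : ℕ) : (ZMod (k + 1))) * a := by
    rw [Int.cast_natCast, ZMod.natCast_mod, Nat.cast_mul, hacast]
  rw [hcastz]
  have hx : a * s * v i + (((i : ℕ) + 1 : ℕ) : (ZMod (k + 1))) * a
      = a * (v i * s + (((i : ℕ) + 1 : ℕ) : (ZMod (k + 1)))) := by ring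
  rw [hx]
  set g := v i * s + (((i : ℕ) + 1 : ℕ) : (ZMod (k + 1))) with hg
  obtain ⟨hg0, hgb⟩ := hgood i
  have hx0 : a * g ≠ 0 := mul_ne_zero ha0 hg0
  have hx1 : a * g ≠ -1 := by
    intro h
    rw [← hab] at h
    exact hgb (mul_left_cancel₀ ha0 h)
  constructor
  · rw [Nat.one_le_iff_ne_zero]
    intro h
    exact hx0 ((ZMod.val_eq_zero _).mp h)
  · have hlt : (a * g).val < k + 1 := ZMod.val_lt _
    have hne : (a * g).val ≠ k := by
      intro h
      apply hx1
      have h5 : (((a * g).val : ℕ) : (ZMod (k + 1))) = a * g := by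
        rw [ZMod.natCast_val, ZMod.cast_id]
      rw [← h5, h]
      have h6 := ZMod.natCast_self (k + 1)
      push_cast at h6
      linear_combination h6
    omega
end

section
/- Let k+1 and p > k(k+1) be odd primes. Let u = (u_1,...,u_k) be a tuple of positive integers with u_i ≡ i (mod p) for all i, and suppose k+1 does not divide gcd(u_1,...,u_k). Then there exists a rational t with denominator dividing (k+1)p such that ‖t·u_i‖ ≥ 1/(k+1) for all i, where ‖x‖ is the distance from x to the nearest integer. -/
/-- Distance from a real number to the nearest integer. -/
noncomputable def distNearestInt (x : ℝ) : ℝ := |x - round x|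

/-!
Write `q = k + 1` and look for `t = w / (q p)`: then `‖t u_i‖ ≥ 1 / q` as soon as the residue of
`w u_i` modulo `q p` lies in `[p, k p]`. If no `u_i` is divisible by `q`, then `w = p` works.
Otherwise take `w ≡ h (mod p)` with `h < q`, so that `w u_i ≡ h (i + 1) < p (mod p)`: the residue
is `p d_i + h (i + 1)` and it suffices that the digit `d_i` avoids `0` and `k`. The residue of `w`
modulo `q` and `h` are free, and they make `d_i ≡ a u_i + s (i + 1) (mod q)` for arbitrary
`a, s ∈ 𝔽_q`. Some choice of `a, s` avoids `{0, -1}` for every `i`: otherwise, whenever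
`P(b) = ∏ (b u_i + i + 1)` is nonzero, its factors run through all of `𝔽_q^×`, so `∑_b P(b)` is
`N ∏_{y ≠ 0} y`, where `0 < N < q` counts the `b` with `P(b) ≠ 0`. But `P` has degree `< q - 1`
since some `u_i ≡ 0`, hence `∑_b P(b) = 0`.
-/

open Finset

theorem Finset.prod_univ_eq_prod_of_surjOn_of_card_le {ι M : Type*} [Fintype ι] [CommMonoid M]
    {t : Finset M} (f : ι → M) (hf : ∀ i, f i ∈ t) (hsurj : ∀ y ∈ t, ∃ i, f i = y)
    (hcard : Fintype.card ι ≤ #t) : ∏ i, f i = ∏ y ∈ t, y :=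
  prod_bij (fun i _ ↦ f i) (fun i _ ↦ hf i)
    (fun _ h₁ _ h₂ ↦ inj_on_of_surj_on_of_card_le (fun i _ ↦ f i) (fun i _ ↦ hf i)
      (by simpa using hsurj) (by simpa using hcard) h₁ h₂)
    (by simpa using hsurj) fun _ _ ↦ rfl

section FiniteField

variable {F ι : Type*} [Field F] [Fintype F] [Fintype ι]

theorem sum_prod_mul_add_eq_zero (v E : ι → F) (hcard : Fintype.card ι < Fintype.card F)
    (hv : ∃ j, v j = 0) : ∑ b : F, ∏ j, (b * v j + E j) = 0 := by
  classical
  calc ∑ b : F, ∏ j, (b * v j + E j)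
      = ∑ b : F, ∑ t ∈ univ.powerset, b ^ #t * ((∏ j ∈ t, v j) * ∏ j ∈ univ \ t, E j) := by
        simp_rw [prod_add, prod_mul_distrib, prod_const, mul_assoc]
    _ = ∑ t ∈ univ.powerset, (∑ b : F, b ^ #t) * ((∏ j ∈ t, v j) * ∏ j ∈ univ \ t, E j) := by
        rw [sum_comm]
        simp_rw [sum_mul]
    _ = 0 := sum_eq_zero fun t _ ↦ by
        rcases eq_or_ne t univ with rfl | ht
        · obtain ⟨j, hj⟩ := hv
          rw [prod_eq_zero (mem_univ j) hj, zero_mul, mul_zero]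
        · have : #t < Fintype.card ι := (card_lt_iff_ne_univ t).mpr ht
          rw [FiniteField.sum_pow_lt_card_sub_one F _ (by omega), zero_mul]

variable [DecidableEq F]

theorem prod_mul_add_eq_prod_erase_zero (v E : ι → F)
    (hcard : Fintype.card ι + 1 = Fintype.card F)
    (hcover : ∀ a s : F, ∃ j, a * v j + s * E j = 0 ∨ a * v j + s * E j = -1)
    {b : F} (hb : ∏ j, (b * v j + E j) ≠ 0) : ∏ j, (b * v j + E j) = ∏ y ∈ univ.erase 0, y := by
  have hne : ∀ j, b * v j + E j ≠ 0 := fun j ↦ prod_ne_zero_iff.mp hb j (mem_univ j)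
  refine prod_univ_eq_prod_of_surjOn_of_card_le _ (fun j ↦ mem_erase.mpr ⟨hne j, mem_univ _⟩)
    (fun y hy ↦ ?_) (by rw [card_erase_of_mem (mem_univ _), card_univ]; omega)
  have hy : y ≠ 0 := (mem_erase.mp hy).1
  -- `y` is hit because the scaled vector `-y⁻¹ (b v + E)` must have a coordinate equal to `-1`.
  obtain ⟨j, hj⟩ := hcover (-y⁻¹ * b) (-y⁻¹)
  have hscale : -y⁻¹ * b * v j + -y⁻¹ * E j = -y⁻¹ * (b * v j + E j) := by ring
  rw [hscale] at hj
  refine ⟨j, ?_⟩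
  rcases hj with h | h
  · exact absurd h (mul_ne_zero (neg_ne_zero.mpr (inv_ne_zero hy)) (hne j))
  · field_simp at h
    linear_combination -h

end FiniteField

theorem ZMod.exists_forall_mul_add_mul_ne_zero_ne_neg_one {q : ℕ} [Fact q.Prime] {ι : Type*}
    [Fintype ι] (v E : ι → ZMod q) (hcard : Fintype.card ι + 1 = q) (hE : ∀ j, E j ≠ 0)
    (hv₀ : ∃ j, v j = 0) (hv₁ : ∃ j, v j ≠ 0) :
    ∃ a s : ZMod q, ∀ j, a * v j + s * E j ≠ 0 ∧ a * v j + s * E j ≠ -1 := by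
  by_contra! hbad
  have hcover : ∀ a s : ZMod q, ∃ j, a * v j + s * E j = 0 ∨ a * v j + s * E j = -1 := by
    intro a s
    obtain ⟨j, hj⟩ := hbad a s
    exact ⟨j, or_iff_not_imp_left.mpr hj⟩
  set P : ZMod q → ZMod q := fun b ↦ ∏ j, (b * v j + E j)
  set R := univ.filter fun b ↦ P b ≠ 0
  have hq : Fintype.card ι < Fintype.card (ZMod q) := by rw [ZMod.card]; omega
  have hsum : ((#R : ℕ) : ZMod q) * ∏ y ∈ univ.erase 0, y = 0 := by
    calc ((#R : ℕ) : ZMod q) * ∏ y ∈ univ.erase 0, y = ∑ b ∈ R, P b := by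
          rw [← nsmul_eq_mul, ← sum_const]
          exact sum_congr rfl fun b hb ↦ (prod_mul_add_eq_prod_erase_zero v E
            (by rwa [ZMod.card]) hcover (mem_filter.mp hb).2).symm
      _ = 0 := by rw [sum_filter_ne_zero]; exact sum_prod_mul_add_eq_zero v E hq hv₀
  have hR : q ∣ #R := by
    rw [← ZMod.natCast_eq_zero_iff]
    refine (mul_eq_zero.mp hsum).resolve_right (prod_ne_zero_iff.mpr fun y hy ↦ ?_)
    exact (mem_erase.mp hy).1
  have hzero : (0 : ZMod q) ∈ R := by
    simpa [R, P, prod_ne_zero_iff] using hE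
  obtain ⟨j, hj⟩ := hv₁
  have hroot : -E j / v j ∉ R := by
    simp only [R, mem_filter, not_and, not_not]
    exact fun _ ↦ prod_eq_zero (mem_univ j) (by field_simp; ring)
  have hRlt : #R < q := by
    calc #R ≤ #(univ.erase (-E j / v j)) := card_le_card fun b hb ↦
          mem_erase.mpr ⟨fun h ↦ hroot (h ▸ hb), mem_univ b⟩
      _ < q := by rw [card_erase_of_mem (mem_univ _), card_univ, ZMod.card]; omega
  exact absurd (Nat.le_of_dvd (card_pos.mpr ⟨0, hzero⟩) hR) (not_le.mpr hRlt)

theorem le_distNearestInt_natCast_div {n N m : ℕ} (h₁ : m ≤ n % N) (h₂ : n % N + m ≤ N) :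
    (m : ℝ) / N ≤ distNearestInt ((n : ℝ) / N) := by
  rw [distNearestInt, abs_sub_round_div_natCast_eq]
  gcongr
  exact le_min h₁ (by omega)

theorem le_mul_and_le_of_div_ne {X p k : ℕ} (hX : X < (k + 1) * p) (h₀ : X / p ≠ 0)
    (hk : X / p ≠ k) : p ≤ X ∧ X ≤ k * p := by
  have hp : 0 < p := Nat.pos_of_ne_zero fun h ↦ by simp [h] at hX
  have hlt : X / p < k + 1 := (Nat.div_lt_iff_lt_mul hp).mpr hX
  constructor
  · simpa using (Nat.le_div_iff_mul_le hp).mp (Nat.one_le_iff_ne_zero.mpr h₀)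
  · have : X / p + 1 ≤ k := by omega
    have := Nat.lt_mul_div_succ X hp
    nlinarith

theorem mul_mod_mul_bounds_of_not_dvd {k p u : ℕ} (hu : ¬ (k + 1) ∣ u) :
    p ≤ p * u % ((k + 1) * p) ∧ p * u % ((k + 1) * p) ≤ k * p := by
  rw [mul_comm (k + 1) p, Nat.mul_mod_mul_left, mul_comm k p]
  have : u % (k + 1) < k + 1 := Nat.mod_lt _ k.succ_pos
  have : u % (k + 1) ≠ 0 := fun h ↦ hu (Nat.dvd_of_mod_eq_zero h)
  exact ⟨Nat.le_mul_of_pos_right p (by omega), Nat.mul_le_mul_left p (by omega)⟩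

theorem mul_div_add_eq_mul_mod_of_modEq {q p w u h e : ℕ} (hw : w ≡ h [MOD p]) (hu : u ≡ e [MOD p])
    (hlt : h * e < p) : p * (w * u % (q * p) / p) + h * e = w * u % (q * p) := by
  have hmod : w * u % (q * p) % p = h * e := by
    rw [Nat.mod_mul_left_mod, ← Nat.mod_eq_of_lt hlt]
    exact hw.mul hu
  conv_rhs => rw [← Nat.div_add_mod (w * u % (q * p)) p, hmod]

theorem Rat.den_natCast_div_natCast_dvd (m n : ℕ) : ((m : ℚ) / n).den ∣ n :=
  Int.natCast_dvd_natCast.mp (by simpa [Rat.divInt_eq_div] using Rat.den_dvd m n)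

theorem exists_rat_le_distNearestInt_of_mul_mod_bounds {ι : Type*} {k p : ℕ} (hp : 0 < p)
    {u : ι → ℕ} (hw : ∃ w, ∀ i, p ≤ w * u i % ((k + 1) * p) ∧ w * u i % ((k + 1) * p) ≤ k * p) :
    ∃ t : ℚ, t.den ∣ (k + 1) * p ∧ ∀ i, 1 / ((k : ℝ) + 1) ≤ distNearestInt (t * u i) := by
  obtain ⟨w, hw⟩ := hw
  refine ⟨(w : ℚ) / ((k + 1) * p : ℕ), Rat.den_natCast_div_natCast_dvd _ _, fun i ↦ ?_⟩
  have hkp : ((p : ℕ) : ℝ) / ((k + 1) * p : ℕ) = 1 / ((k : ℝ) + 1) := by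
    push_cast
    field_simp
  have hcast : (((w : ℚ) / ((k + 1) * p : ℕ) : ℚ) : ℝ) * u i =
      (w * u i : ℕ) / ((k + 1) * p : ℕ) := by
    push_cast
    ring
  rw [← hkp, hcast]
  exact le_distNearestInt_natCast_div (hw i).1
    (by linarith [(hw i).2, add_one_mul k p])

theorem exists_mul_mod_bounds_of_forall_ne {k p : ℕ} [Fact (k + 1).Prime] (hpq : ¬ (k + 1) ∣ p)
    (hp : k * (k + 1) < p) (u : Fin k → ℕ) (hcong : ∀ i : Fin k, u i ≡ (i : ℕ) + 1 [MOD p])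
    {a s : ZMod (k + 1)}
    (has : ∀ j : Fin k, a * u j + s * ((j : ℕ) + 1) ≠ 0 ∧ a * u j + s * ((j : ℕ) + 1) ≠ -1) :
    ∃ w, ∀ i, p ≤ w * u i % ((k + 1) * p) ∧ w * u i % ((k + 1) * p) ≤ k * p := by
  have hp₀ : (p : ZMod (k + 1)) ≠ 0 := by rwa [Ne, ZMod.natCast_eq_zero_iff]
  -- `w ≡ p a` and `h ≡ -p s` modulo `k + 1` make the digit `X / p` equal to `a u_i + s (i + 1)`.
  set h := (-(p : ZMod (k + 1)) * s).val
  obtain ⟨w, hwq, hwp⟩ := Nat.chineseRemainder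
    ((Nat.Prime.coprime_iff_not_dvd Fact.out).mpr hpq) ((p : ZMod (k + 1)) * a).val h
  refine ⟨w, fun i ↦ ?_⟩
  have hlt : h * ((i : ℕ) + 1) < p := by
    have : h < k + 1 := ZMod.val_lt _
    have : (i : ℕ) + 1 ≤ k := i.isLt
    nlinarith
  have hX := mul_div_add_eq_mul_mod_of_modEq (q := k + 1) hwp (hcong i) hlt
  set X := w * u i % ((k + 1) * p)
  have hXw : (X : ZMod (k + 1)) = w * u i := by
    rw [← Nat.cast_mul, ZMod.natCast_eq_natCast_iff]
    exact (Nat.mod_modEq _ _).of_mul_right p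
  have hw : (w : ZMod (k + 1)) = p * a := by
    rw [(ZMod.natCast_eq_natCast_iff _ _ _).mpr hwq, ZMod.natCast_zmod_val]
  have hd : ((X / p : ℕ) : ZMod (k + 1)) = a * u i + s * ((i : ℕ) + 1) := by
    have hcast := congrArg (Nat.cast : ℕ → ZMod (k + 1)) hX
    push_cast [hXw, hw, h, ZMod.natCast_zmod_val] at hcast
    refine mul_left_cancel₀ hp₀ ?_
    linear_combination hcast
  have hpos : 0 < (k + 1) * p := Nat.mul_pos k.succ_pos (by omega)
  refine le_mul_and_le_of_div_ne (Nat.mod_lt _ hpos) (fun h₀ ↦ (has i).1 ?_)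
    (fun hk ↦ (has i).2 ?_)
  · rw [← hd, h₀, Nat.cast_zero]
  · rw [← hd, hk]
    have hq := ZMod.natCast_self (k + 1)
    push_cast at hq
    linear_combination hq

theorem stmt_8_general (k p : ℕ) (hp : Nat.Prime (k + 1))
    (hpp : Nat.Prime p) (hplarge : p > k * (k + 1))
    (u : Fin k → ℕ)
    (hcong : ∀ i : Fin k, u i ≡ (i : ℕ) + 1 [MOD p])
    (hgcd : ¬ ((k + 1) ∣ Finset.univ.gcd u)) :
    ∃ t : ℚ, (t.den : ℕ) ∣ (k + 1) * p ∧
      ∀ i : Fin k, distNearestInt ((t : ℝ) * (u i : ℝ)) ≥ 1 / ((k : ℝ) + 1) := by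
  have := Fact.mk hp
  have hk : 1 ≤ k := by have := hp.two_le; omega
  have hpq : ¬ (k + 1) ∣ p := fun h ↦ by
    have := (Nat.prime_dvd_prime_iff_eq hp hpp).mp h
    nlinarith
  apply exists_rat_le_distNearestInt_of_mul_mod_bounds hpp.pos
  by_cases hall : ∀ i, ¬ (k + 1) ∣ u i
  · exact ⟨p, fun i ↦ mul_mod_mul_bounds_of_not_dvd (hall i)⟩
  push Not at hall
  obtain ⟨j₀, hj₀⟩ := hall
  obtain ⟨j₁, hj₁⟩ : ∃ j, ¬ (k + 1) ∣ u j := by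
    by_contra! h
    exact hgcd (Finset.dvd_gcd fun i _ ↦ h i)
  obtain ⟨a, s, has⟩ := ZMod.exists_forall_mul_add_mul_ne_zero_ne_neg_one
    (fun j ↦ (u j : ZMod (k + 1))) (fun j : Fin k ↦ ((j : ℕ) : ZMod (k + 1)) + 1) (by simp)
    (fun j h ↦ by
      rw [← Nat.cast_succ, ZMod.natCast_eq_zero_iff] at h
      exact absurd (Nat.le_of_dvd j.succ_pos h) (by omega))
    ⟨j₀, (ZMod.natCast_eq_zero_iff _ _).mpr hj₀⟩ ⟨j₁, by rwa [Ne, ZMod.natCast_eq_zero_iff]⟩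
  exact exists_mul_mod_bounds_of_forall_ne hpq hplarge u hcong has

theorem stmt_8 (k p : ℕ) (hp : Nat.Prime (k + 1)) (hodd : Odd (k + 1))
    (hpp : Nat.Prime p) (hpodd : Odd p) (hplarge : p > k * (k + 1))
    (u : Fin k → ℕ) (hupos : ∀ i, 0 < u i)
    (hcong : ∀ i : Fin k, u i ≡ (i : ℕ) + 1 [MOD p])
    (hgcd : ¬ ((k + 1) ∣ Finset.univ.gcd u)) :
    ∃ t : ℚ, (t.den : ℕ) ∣ (k + 1) * p ∧
      ∀ i : Fin k, distNearestInt ((t : ℝ) * (u i : ℝ)) ≥ 1 / ((k : ℝ) + 1) :=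
  stmt_8_general k p hp hpp hplarge u hcong hgcd
end

section
/- Let k+1 and p > k²+k be odd primes, and let (u_1,...,u_k) be positive integers with gcd(u_1,...,u_k) = 1 and u_i ≡ i (mod p) for all i = 1,...,k. Then (u_1,...,u_k) has the LR property: there exists a real t with ‖t·u_i‖ ≥ 1/(k+1) for all i. -/
open Finset Polynomial

lemma prod_erase_zero_eq_neg_one_s9 (K : Type*) [Field K] [Fintype K] [DecidableEq K] :
    (∏ x ∈ (univ : Finset K).erase 0, x) = -1 := by
  classical
  let φ : Kˣ ↪ K := ⟨fun x ↦ x, fun _ _ h => Units.ext h⟩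
  have himg : univ.map φ = (univ : Finset K).erase 0 := by
    ext x
    simp only [mem_map, mem_univ, Function.Embedding.coeFn_mk, true_and, mem_erase, φ,
      and_true]
    constructor
    · rintro ⟨u, rfl⟩; exact u.ne_zero
    · intro hx; exact ⟨(isUnit_iff_ne_zero.mpr hx).unit, rfl⟩
  rw [← himg, Finset.prod_map]
  have : (∏ x : Kˣ, (φ x : K)) = ((∏ x : Kˣ, x : Kˣ) : K) := by
    simp [φ]; rfl
  rw [this, FiniteField.prod_univ_units_id_eq_neg_one]
  simp

lemma key_lemma (k : ℕ) (hp : Nat.Prime (k + 1)) (v : Fin k → ZMod (k + 1))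
    (h0 : ∃ i, v i = 0) (h1 : ∃ i, v i ≠ 0) :
    ∃ a d : ZMod (k + 1), d ≠ 0 ∧ ∀ i : Fin k,
      a * v i + d * (((i : ℕ) + 1 : ℕ) : ZMod (k + 1)) ≠ 0 ∧
      a * v i + d * (((i : ℕ) + 1 : ℕ) : ZMod (k + 1)) ≠ 1 := by
  haveI : Fact (Nat.Prime (k + 1)) := ⟨hp⟩
  classical
  obtain ⟨i₀, hi₀⟩ := h1
  obtain ⟨i₁, hi₁⟩ := h0
  set P : Polynomial (ZMod (k + 1)) :=
    ∏ i : Fin k, (C (v i) * X + C (((i : ℕ) + 1 : ℕ) : ZMod (k + 1))) with hP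
  have heval : ∀ ρ : ZMod (k + 1),
      P.eval ρ = ∏ i : Fin k, (v i * ρ + (((i : ℕ) + 1 : ℕ) : ZMod (k + 1))) := by
    intro ρ; simp [hP, eval_prod]
  have hJne : ∀ i : Fin k, (((i : ℕ) + 1 : ℕ) : ZMod (k + 1)) ≠ 0 := by
    intro i
    rw [Ne, ZMod.natCast_eq_zero_iff]
    intro hdvd
    have := Nat.le_of_dvd (by omega) hdvd
    omega
  have hP0 : P.eval 0 = -1 := by
    rw [heval 0]
    have h1 : ∏ i : Fin k, (v i * 0 + (((i : ℕ) + 1 : ℕ) : ZMod (k + 1)))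
        = ∏ i : Fin k, ((((i : ℕ) + 1 : ℕ) : ZMod (k + 1))) := by
      apply Finset.prod_congr rfl; intro i _; ring
    have h2 : ∏ i : Fin k, ((((i : ℕ) + 1 : ℕ) : ZMod (k + 1)))
        = ((Nat.factorial k : ℕ) : ZMod (k + 1)) := by
      rw [← Nat.cast_prod]
      congr 1
      rw [Fin.prod_univ_eq_prod_range (fun i => i + 1)]
      exact Finset.prod_range_add_one_eq_factorial k
    rw [h1, h2]
    have hw := ZMod.wilsons_lemma (k + 1)
    simpa using hw
  have hPne : P ≠ 0 := fun h => by simp [h] at hP0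
  have hdeg : P.natDegree ≤ k - 1 := by
    have hz : (C (v i₁) * X + C (((i₁ : ℕ) + 1 : ℕ) : ZMod (k + 1))).natDegree = 0 := by
      rw [hi₁, map_zero, zero_mul, zero_add]; exact natDegree_C _
    have hb : ∀ i ∈ univ.erase i₁,
        (C (v i) * X + C (((i : ℕ) + 1 : ℕ) : ZMod (k + 1))).natDegree ≤ 1 := by
      intro i _; exact natDegree_linear_le
    have hs := Finset.sum_le_card_nsmul _ _ 1 hb
    rw [Finset.card_erase_of_mem (mem_univ i₁), Finset.card_univ, Fintype.card_fin] at hs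
    simp only [smul_eq_mul, mul_one] at hs
    calc P.natDegree
        ≤ ∑ i : Fin k, (C (v i) * X + C (((i : ℕ) + 1 : ℕ) : ZMod (k + 1))).natDegree :=
          natDegree_prod_le _ _
    _ = (C (v i₁) * X + C (((i₁ : ℕ) + 1 : ℕ) : ZMod (k + 1))).natDegree
        + ∑ i ∈ univ.erase i₁, (C (v i) * X + C (((i : ℕ) + 1 : ℕ) : ZMod (k + 1))).natDegree :=
          (Finset.add_sum_erase univ (fun i => (C (v i) * X + C (((i : ℕ) + 1 : ℕ) : ZMod (k + 1))).natDegree) (mem_univ i₁)).symm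
    _ ≤ k - 1 := by rw [hz, zero_add]; exact hs
  -- find ρ with eval ∉ {0, -1}
  have hk1 : 0 < k := i₀.pos
  have hstep : ∃ ρ : ZMod (k + 1), P.eval ρ ≠ 0 ∧ P.eval ρ ≠ -1 := by
    by_contra hfail
    push_neg at hfail
    set Z : Finset (ZMod (k + 1)) := univ.filter (fun ρ => P.eval ρ = 0) with hZ
    have hZne : Z.Nonempty := by
      refine ⟨-((((i₀ : ℕ) + 1 : ℕ) : ZMod (k + 1)) * (v i₀)⁻¹), ?_⟩
      rw [hZ, mem_filter]
      refine ⟨mem_univ _, ?_⟩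
      rw [heval]
      apply Finset.prod_eq_zero (mem_univ i₀)
      rw [mul_comm (v i₀)]
      rw [neg_mul, mul_assoc, inv_mul_cancel₀ hi₀]
      ring
    have hZcard : Z.card ≤ k - 1 := by
      have h1 : Z ⊆ P.roots.toFinset := by
        intro ρ hρ
        rw [hZ, mem_filter] at hρ
        rw [Multiset.mem_toFinset, mem_roots hPne]
        exact hρ.2
      calc Z.card ≤ P.roots.toFinset.card := Finset.card_le_card h1
        _ ≤ Multiset.card P.roots := Multiset.toFinset_card_le _
        _ ≤ P.natDegree := P.card_roots'
        _ ≤ k - 1 := hdeg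
    have hcard : Fintype.card (ZMod (k + 1)) = k + 1 := ZMod.card _
    have hsum0 : ∑ ρ : ZMod (k + 1), P.eval ρ = 0 := by
      have hlt : P.natDegree < k := by omega
      have h1 : ∀ ρ : ZMod (k + 1), P.eval ρ = ∑ e ∈ range k, P.coeff e * ρ ^ e := by
        intro ρ; exact eval_eq_sum_range' hlt ρ
      calc ∑ ρ : ZMod (k + 1), P.eval ρ
          = ∑ ρ : ZMod (k + 1), ∑ e ∈ range k, P.coeff e * ρ ^ e := by
            apply Finset.sum_congr rfl; intro ρ _; exact h1 ρ
        _ = ∑ e ∈ range k, ∑ ρ : ZMod (k + 1), P.coeff e * ρ ^ e := Finset.sum_comm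
        _ = 0 := by
            apply Finset.sum_eq_zero
            intro e he
            rw [← Finset.mul_sum]
            rw [FiniteField.sum_pow_lt_card_sub_one _ e (by rw [hcard]; simp at he; omega)]
            ring
    have hsum1 : ∑ ρ : ZMod (k + 1), P.eval ρ
        = -(((univ.filter (fun ρ : ZMod (k + 1) => ¬ P.eval ρ = 0)).card : ZMod (k + 1))) := by
      rw [← Finset.sum_filter_add_sum_filter_not univ (fun ρ => P.eval ρ = 0)]
      have e1 : ∑ ρ ∈ univ.filter (fun ρ : ZMod (k + 1) => P.eval ρ = 0), P.eval ρ = 0 := by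
        apply Finset.sum_eq_zero; intro ρ hρ; exact (mem_filter.mp hρ).2
      have e2 : ∑ ρ ∈ univ.filter (fun ρ : ZMod (k + 1) => ¬ P.eval ρ = 0), P.eval ρ
          = ((univ.filter (fun ρ : ZMod (k + 1) => ¬ P.eval ρ = 0)).card) • (-1 : ZMod (k + 1)) := by
        rw [Finset.sum_congr rfl (fun ρ hρ => hfail ρ (mem_filter.mp hρ).2), Finset.sum_const]
      rw [e1, e2, zero_add, nsmul_eq_mul]
      ring
    have hcards : Z.card + (univ.filter (fun ρ : ZMod (k + 1) => ¬ P.eval ρ = 0)).card = k + 1 := by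
      rw [hZ]
      have := Finset.card_filter_add_card_filter_not
        (s := (univ : Finset (ZMod (k + 1)))) (p := fun ρ => P.eval ρ = 0)
      rw [Finset.card_univ, hcard] at this
      exact this
    have hc2 : (((univ.filter (fun ρ : ZMod (k + 1) => ¬ P.eval ρ = 0)).card : ZMod (k + 1))) = 0 := by
      have h := hsum0.symm.trans hsum1
      exact neg_eq_zero.mp h.symm
    rw [ZMod.natCast_eq_zero_iff] at hc2
    have hZpos : 0 < Z.card := Finset.card_pos.mpr hZne
    have hc2pos : 0 < (univ.filter (fun ρ : ZMod (k + 1) => ¬ P.eval ρ = 0)).card := by omega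
    have := Nat.le_of_dvd hc2pos hc2
    omega
  obtain ⟨ρ, hρ0, hρ1⟩ := hstep
  -- all factors nonzero
  have hgne : ∀ i : Fin k, v i * ρ + (((i : ℕ) + 1 : ℕ) : ZMod (k + 1)) ≠ 0 := by
    intro i hzero
    exact hρ0 (by rw [heval]; exact Finset.prod_eq_zero (mem_univ i) hzero)
  -- non-injectivity
  have hninj : ¬ Function.Injective
      (fun i : Fin k => v i * ρ + (((i : ℕ) + 1 : ℕ) : ZMod (k + 1))) := by
    intro hinj
    apply hρ1
    rw [heval]
    have himg : Finset.image (fun i : Fin k => v i * ρ + (((i : ℕ) + 1 : ℕ) : ZMod (k + 1))) univ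
        = (univ : Finset (ZMod (k + 1))).erase 0 := by
      apply Finset.eq_of_subset_of_card_le
      · intro x hx
        rw [Finset.mem_image] at hx
        obtain ⟨i, _, rfl⟩ := hx
        exact Finset.mem_erase.mpr ⟨hgne i, mem_univ _⟩
      · rw [Finset.card_erase_of_mem (mem_univ 0), Finset.card_univ, ZMod.card,
          Finset.card_image_of_injective _ hinj, Finset.card_univ, Fintype.card_fin]
        omega
    have hpi := Finset.prod_image (f := fun x : ZMod (k + 1) => x)
      (g := fun i : Fin k => v i * ρ + (((i : ℕ) + 1 : ℕ) : ZMod (k + 1)))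
      (s := univ) (fun a _ b _ h => hinj h)
    calc ∏ i : Fin k, (v i * ρ + (((i : ℕ) + 1 : ℕ) : ZMod (k + 1)))
        = ∏ x ∈ Finset.image (fun i : Fin k => v i * ρ + (((i : ℕ) + 1 : ℕ) : ZMod (k + 1))) univ,
            x := hpi.symm
      _ = -1 := by rw [himg]; exact prod_erase_zero_eq_neg_one_s9 _
  rw [Function.not_injective_iff] at hninj
  obtain ⟨i, i', hgg, hii⟩ := hninj
  -- bad set of t
  set T : Finset (ZMod (k + 1)) := insert 0 (Finset.image
    (fun i : Fin k => (v i * ρ + (((i : ℕ) + 1 : ℕ) : ZMod (k + 1)))⁻¹) univ) with hT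
  have hTcard : T.card < k + 1 := by
    have h1 : Finset.image (fun i : Fin k => (v i * ρ + (((i : ℕ) + 1 : ℕ) : ZMod (k + 1)))⁻¹) univ
        = Finset.image (fun i : Fin k => (v i * ρ + (((i : ℕ) + 1 : ℕ) : ZMod (k + 1)))⁻¹)
          (univ.erase i') := by
      apply Finset.Subset.antisymm
      · intro x hx
        rw [Finset.mem_image] at hx ⊢
        obtain ⟨b, _, rfl⟩ := hx
        by_cases hb : b = i'
        · exact ⟨i, Finset.mem_erase.mpr ⟨hii, mem_univ _⟩, by rw [hb] at *; rw [hgg]⟩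
        · exact ⟨b, Finset.mem_erase.mpr ⟨hb, mem_univ _⟩, rfl⟩
      · exact Finset.image_subset_image (Finset.erase_subset _ _)
    calc T.card ≤ (Finset.image
          (fun i : Fin k => (v i * ρ + (((i : ℕ) + 1 : ℕ) : ZMod (k + 1)))⁻¹) univ).card + 1 :=
          Finset.card_insert_le _ _
      _ ≤ (univ.erase i').card + 1 := by
          rw [h1]; exact Nat.add_le_add_right (Finset.card_image_le) 1
      _ < k + 1 := by
          rw [Finset.card_erase_of_mem (mem_univ i'), Finset.card_univ, Fintype.card_fin]
          omega
  have hTex : ∃ t : ZMod (k + 1), t ∉ T := by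
    by_contra hall
    push_neg at hall
    have : (univ : Finset (ZMod (k + 1))) ⊆ T := fun x _ => hall x
    have := Finset.card_le_card this
    rw [Finset.card_univ, ZMod.card] at this
    omega
  obtain ⟨t, ht⟩ := hTex
  have ht0 : t ≠ 0 := by
    intro h
    apply ht
    rw [h, hT]
    exact Finset.mem_insert_self _ _
  have htinv : ∀ i : Fin k, t ≠ (v i * ρ + (((i : ℕ) + 1 : ℕ) : ZMod (k + 1)))⁻¹ := by
    intro i h
    apply ht
    rw [hT, h]
    exact Finset.mem_insert_of_mem (Finset.mem_image_of_mem _ (mem_univ i))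
  refine ⟨t * ρ, t, ht0, fun i => ⟨?_, ?_⟩⟩
  · intro h
    have : t * (v i * ρ + (((i : ℕ) + 1 : ℕ) : ZMod (k + 1))) = 0 := by
      rw [← h]; ring
    rcases mul_eq_zero.mp this with h' | h'
    · exact ht0 h'
    · exact hgne i h'
  · intro h
    have hmul : t * (v i * ρ + (((i : ℕ) + 1 : ℕ) : ZMod (k + 1))) = 1 := by
      rw [← h]; ring
    exact htinv i (eq_inv_of_mul_eq_one_left hmul)



lemma dist_ge_aux (x b : ℝ) (h : ∀ M : ℤ, b ≤ |x - M|) : distNearestInt x ≥ b :=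
  h (round x)

theorem stmt_9 (k p : ℕ) (hp : Nat.Prime (k + 1)) (hodd : Odd (k + 1))
    (hpp : Nat.Prime p) (hpodd : Odd p) (hplarge : p > k ^ 2 + k)
    (u : Fin k → ℕ) (hupos : ∀ i, 0 < u i)
    (hgcd : Finset.univ.gcd u = 1)
    (hcong : ∀ i : Fin k, u i ≡ (i : ℕ) + 1 [MOD p]) :
    ∃ t : ℝ, ∀ i : Fin k, distNearestInt (t * (u i : ℝ)) ≥ 1 / ((k : ℝ) + 1) := by
  haveI : Fact (Nat.Prime (k + 1)) := ⟨hp⟩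
  haveI : Fact (Nat.Prime p) := ⟨hpp⟩
  have hk1 : 1 ≤ k := by
    have := hp.two_le; omega
  have hppos : 0 < p := hpp.pos
  have hkreal : (0:ℝ) < (k:ℝ) + 1 := by positivity
  have hpreal : (0:ℝ) < (p:ℝ) := by exact_mod_cast hppos
  by_cases hall : ∀ i : Fin k, ((u i : ZMod (k + 1)) ≠ 0)
  · -- easy case : t = 1/(k+1)
    refine ⟨1 / ((k:ℝ) + 1), fun i => dist_ge_aux _ _ fun M => ?_⟩
    have hB : (u i : ℤ) - (k + 1) * M ≠ 0 := by
      intro h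
      apply hall i
      have h2 : (u i : ℤ) = ((k:ℤ) + 1) * M := by omega
      have h3 : ((u i : ℤ) : ZMod (k + 1)) = 0 := by
        rw [h2]
        push_cast
        simp [ZMod.natCast_self]
      rwa [Int.cast_natCast] at h3
    have h1 : (1:ℝ) ≤ |((u i : ℤ) : ℝ) - ((k:ℝ) + 1) * M| := by
      have : (1:ℤ) ≤ |(u i : ℤ) - (k + 1) * M| := Int.one_le_abs hB
      calc (1:ℝ) = ((1:ℤ):ℝ) := by norm_num
        _ ≤ (|(u i : ℤ) - (k + 1) * M| : ℝ) := by exact_mod_cast this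
        _ = |((u i : ℤ) : ℝ) - ((k:ℝ) + 1) * M| := by push_cast; ring_nf
    have heqv : 1 / ((k:ℝ) + 1) * (u i : ℝ) - M
        = (((u i : ℤ) : ℝ) - ((k:ℝ) + 1) * M) / ((k:ℝ) + 1) := by
      field_simp
      rw [Int.cast_natCast]
    rw [heqv, abs_div, abs_of_pos hkreal, div_le_div_iff₀ hkreal hkreal]
    nlinarith [h1, hkreal]
  · push_neg at hall
    obtain ⟨i₁, hi₁⟩ := hall
    have hex : ∃ i : Fin k, ((u i : ZMod (k + 1)) ≠ 0) := by
      by_contra hno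
      push_neg at hno
      have hdvd : (k + 1) ∣ Finset.univ.gcd u := by
        apply Finset.dvd_gcd
        intro i _
        have := hno i
        rwa [ZMod.natCast_eq_zero_iff] at this
      rw [hgcd] at hdvd
      have := Nat.le_of_dvd (by norm_num) hdvd
      omega
    obtain ⟨a, d, hd, hcond⟩ := key_lemma k hp (fun i => (u i : ZMod (k + 1))) ⟨i₁, hi₁⟩ hex
    -- hard case
    set D := d.val with hDdef
    set A := a.val with hAdef
    have hD0 : D ≠ 0 := fun h => hd (by rwa [← ZMod.val_eq_zero])
    have hDlt : D < k + 1 := ZMod.val_lt d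
    set m := (D * p) / (k + 1) with hmdef
    set S := (D * p) % (k + 1) with hSdef
    have hNm : (k + 1) * m + S = D * p := Nat.div_add_mod _ _
    have hSlt : S < k + 1 := Nat.mod_lt _ (by omega)
    refine ⟨(A : ℝ) / ((k:ℝ) + 1) + (m : ℝ) / (p : ℝ), fun i => dist_ge_aux _ _ fun M => ?_⟩
    set j := (i : ℕ) + 1 with hjdef
    have hjk : j ≤ k := by have := i.2; omega
    have hjp : j < p :=
      lt_of_le_of_lt (le_trans hjk (Nat.le_add_left k (k ^ 2))) hplarge
    set cc := u i / p with hccdef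
    have hcc : u i = p * cc + j := by
      have h2 : u i % p = j := by
        have h3 := hcong i
        unfold Nat.ModEq at h3
        rw [Nat.mod_eq_of_lt hjp] at h3
        exact h3
      calc u i = p * (u i / p) + u i % p := (Nat.div_add_mod _ _).symm
        _ = p * cc + j := by rw [h2]
    set Q := (D * j) / (k + 1) with hQdef
    set E := (D * j) % (k + 1) with hEdef
    have hQE : (k + 1) * Q + E = D * j := Nat.div_add_mod _ _
    have hElt : E < k + 1 := Nat.mod_lt _ (by omega)
    set Ad := (A * u i) / (k + 1) with hAddef
    set w := (A * u i) % (k + 1) with hwdef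
    have hAd : (k + 1) * Ad + w = A * u i := Nat.div_add_mod _ _
    set C := w + E with hCdef
    set Nint := Ad + m * cc + Q with hNintdef
    -- integer identity
    have hG : (A:ℤ) * (u i) * p + (m:ℤ) * (u i) * ((k:ℤ)+1) + (S:ℤ) * (j:ℤ)
        = ((k:ℤ)+1) * p * (Nint:ℤ) + (p:ℤ) * (C:ℤ) := by
      have h1 : ((k:ℤ)+1) * Ad + w = (A:ℤ) * (u i) := by exact_mod_cast hAd
      have h2 : ((u i : ℕ) : ℤ) = (p:ℤ) * cc + j := by exact_mod_cast hcc
      have h3 : ((k:ℤ)+1) * m + S = (D:ℤ) * p := by exact_mod_cast hNm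
      have h4 : ((k:ℤ)+1) * Q + E = (D:ℤ) * j := by exact_mod_cast hQE
      have h5 : (C:ℤ) = (w:ℤ) + E := by exact_mod_cast rfl
      have h6 : (Nint:ℤ) = (Ad:ℤ) + (m:ℤ) * cc + Q := by exact_mod_cast rfl
      rw [h5, h6]
      linear_combination (-(p:ℤ)) * h1 + (((k:ℤ)+1) * m) * h2 + (j:ℤ) * h3 + (-(p:ℤ)) * h4
    set B : ℤ := (C : ℤ) + ((k:ℤ)+1) * ((Nint : ℤ) - M) with hBdef
    -- residue facts
    have hw' : ((w : ℕ) : ZMod (k+1)) = a * (u i : ZMod (k+1)) := by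
      rw [hwdef, ZMod.natCast_mod]
      push_cast
      rw [ZMod.natCast_val, ZMod.cast_id]
    have hE' : ((E : ℕ) : ZMod (k+1)) = d * ((j : ℕ) : ZMod (k+1)) := by
      rw [hEdef, ZMod.natCast_mod]
      push_cast
      rw [ZMod.natCast_val, ZMod.cast_id]
    have hCz : ((C : ℕ) : ZMod (k+1)) = a * (u i : ZMod (k+1)) + d * ((j : ℕ) : ZMod (k+1)) := by
      rw [hCdef, Nat.cast_add, hw', hE']
    have hk0 : ((k : ZMod (k+1)) + 1) = 0 := by
      have := ZMod.natCast_self (k+1)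
      push_cast at this
      exact this
    have hBz : ((B : ℤ) : ZMod (k+1)) = a * (u i : ZMod (k+1)) + d * ((j : ℕ) : ZMod (k+1)) := by
      rw [hBdef]
      push_cast
      rw [hk0, hCz]
      push_cast
      ring
    have hB0 : B ≠ 0 := by
      intro h
      have := (hcond i).1
      rw [← hCz] at this
      apply this
      have : ((B : ℤ) : ZMod (k+1)) = 0 := by rw [h]; simp
      rw [hBz, ← hCz] at this
      exact this
    have hB1 : B ≠ 1 := by
      intro h
      have h2 := (hcond i).2
      apply h2
      have h3 : ((B : ℤ) : ZMod (k+1)) = 1 := by rw [h]; simp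
      rw [hBz] at h3
      exact h3
    -- value identity
    have hGR : (A:ℝ) * (u i) * p + (m:ℝ) * (u i) * ((k:ℝ)+1) + (S:ℝ) * (j:ℝ)
        = ((k:ℝ)+1) * p * (Nint:ℝ) + (p:ℝ) * (C:ℝ) := by exact_mod_cast hG
    have hval : ((A : ℝ) / ((k:ℝ) + 1) + (m : ℝ) / (p : ℝ)) * (u i : ℝ) - M
        = (((p:ℤ) * B - (S:ℤ) * (j:ℤ) : ℤ) : ℝ) / (((k:ℝ) + 1) * p) := by
      have h7 : ((A : ℝ) / ((k:ℝ) + 1) + (m : ℝ) / (p : ℝ)) * (u i : ℝ) - M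
          = ((A:ℝ) * (u i) * p + (m:ℝ) * (u i) * ((k:ℝ)+1) - ((k:ℝ)+1) * p * M)
            / (((k:ℝ) + 1) * p) := by
        field_simp
      rw [h7]
      congr 1
      rw [hBdef]
      push_cast
      have hjR : (j:ℝ) = ((i:ℕ):ℝ) + 1 := by rw [hjdef]; push_cast; ring
      linear_combination hGR
    -- bound
    have hSj : (S:ℤ) * (j:ℤ) < p := by
      have h1 : S * j ≤ k * k := Nat.mul_le_mul (by omega) hjk
      have h2 : S * j < p := by
        calc S * j ≤ k * k := h1
          _ = k ^ 2 := by ring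
          _ ≤ k ^ 2 + k := Nat.le_add_right _ _
          _ < p := hplarge
      exact_mod_cast h2
    have hSj0 : (0:ℤ) ≤ (S:ℤ) * (j:ℤ) := by positivity
    have hpz : (0:ℤ) < (p:ℤ) := by exact_mod_cast hppos
    have habs : (p : ℤ) ≤ |(p:ℤ) * B - (S:ℤ) * (j:ℤ)| := by
      have hcase : B ≤ -1 ∨ 2 ≤ B := by omega
      rcases hcase with h | h
      · apply le_abs.mpr
        right
        have h5 : (p:ℤ) * B ≤ (p:ℤ) * (-1) := mul_le_mul_of_nonneg_left h (le_of_lt hpz)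
        linarith
      · apply le_abs.mpr
        left
        have h5 : (p:ℤ) * 2 ≤ (p:ℤ) * B := mul_le_mul_of_nonneg_left h (le_of_lt hpz)
        linarith
    have habsR : (p:ℝ) ≤ |(((p:ℤ) * B - (S:ℤ) * (j:ℤ) : ℤ) : ℝ)| := by
      calc (p:ℝ) = ((p:ℤ) : ℝ) := by push_cast; ring
        _ ≤ (|(p:ℤ) * B - (S:ℤ) * (j:ℤ)| : ℤ) := by exact_mod_cast habs
        _ = |(((p:ℤ) * B - (S:ℤ) * (j:ℤ) : ℤ) : ℝ)| := by
            rw [Int.cast_abs]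
    have hden : (0:ℝ) < ((k:ℝ) + 1) * p := by positivity
    rw [hval, abs_div, abs_of_pos hden, div_le_div_iff₀ hkreal hden]
    calc 1 * (((k:ℝ) + 1) * p) = (p:ℝ) * ((k:ℝ)+1) := by ring
      _ ≤ |(((p:ℤ) * B - (S:ℤ) * (j:ℤ) : ℤ) : ℝ)| * ((k:ℝ)+1) :=
          mul_le_mul_of_nonneg_right habsR (le_of_lt hkreal)
end

section
/- Suppose p > k+1 is prime and l is a positive integer not divisible by k+1. Then the tuple (1,2,...,k) has no witness time in (1/(lp))·Z; that is, for every rational t with denominator dividing lp, there exists i ∈ {1,...,k} with ‖t·i‖ < 1/(k+1). -/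
lemma dist_le_bounds (t : ℚ) (m : ℕ) :
    distNearestInt ((t : ℝ) * m) ≤ (((m * t.num % (t.den : ℤ)) : ℤ) : ℝ) / (t.den : ℝ) ∧
    distNearestInt ((t : ℝ) * m) ≤ ((((t.den : ℤ) - m * t.num % (t.den : ℤ)) : ℤ) : ℝ) / (t.den : ℝ) := by
  have hq0 : (0 : ℤ) < (t.den : ℤ) := by exact_mod_cast t.pos
  have hqR : (0 : ℝ) < (t.den : ℝ) := by exact_mod_cast t.pos
  set b : ℤ := (m * t.num) / (t.den : ℤ) with hbdef
  set r : ℤ := (m * t.num) % (t.den : ℤ) with hrdef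
  have hr0 : 0 ≤ r := Int.emod_nonneg _ (ne_of_gt hq0)
  have hr1 : r < (t.den : ℤ) := Int.emod_lt_of_pos _ hq0
  have hbr : (t.den : ℤ) * b + r = m * t.num := Int.mul_ediv_add_emod _ _
  have hrR : (r : ℝ) = (m : ℝ) * (t.num : ℝ) - (t.den : ℝ) * (b : ℝ) := by
    have : r = (m : ℤ) * t.num - (t.den : ℤ) * b := by omega
    rw [this]; push_cast; ring
  have hr0R : (0:ℝ) ≤ (r:ℝ) := by exact_mod_cast hr0
  have hr1R : (r:ℝ) ≤ (t.den : ℝ) := by exact_mod_cast hr1.le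
  have hx : (t : ℝ) * m = ((m : ℝ) * (t.num : ℝ)) / (t.den : ℝ) := by
    rw [Rat.cast_def]; field_simp
  constructor
  · have h1 : distNearestInt ((t : ℝ) * m) ≤ |(t : ℝ) * m - (b : ℤ)| := round_le _ _
    refine h1.trans (le_of_eq ?_)
    rw [hx]
    have : (m : ℝ) * (t.num : ℝ) / (t.den : ℝ) - ((b : ℤ) : ℝ) = (r : ℝ) / (t.den : ℝ) := by
      rw [hrR]; field_simp
    rw [this, abs_of_nonneg (by positivity)]
  · have h1 : distNearestInt ((t : ℝ) * m) ≤ |(t : ℝ) * m - ((b + 1 : ℤ))| := round_le _ _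
    refine h1.trans (le_of_eq ?_)
    rw [hx]
    have : (m : ℝ) * (t.num : ℝ) / (t.den : ℝ) - ((b + 1 : ℤ) : ℝ)
        = ((r : ℝ) - (t.den : ℝ)) / (t.den : ℝ) := by
      rw [hrR]; push_cast; field_simp; ring
    rw [this, abs_of_nonpos (by apply div_nonpos_of_nonpos_of_nonneg <;> linarith)]
    push_cast
    ring

lemma main_aux (k : ℕ) (q a : ℤ) (hk : 1 ≤ k) (hq2 : (k:ℤ) + 2 ≤ q)
    (hnd : ¬ (((k:ℤ) + 1) ∣ q))
    (H0 : ∀ m : ℕ, 1 ≤ m → m ≤ k →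
      q ≤ ((m:ℤ) * a % q) * ((k:ℤ) + 1) ∧ q ≤ (q - (m:ℤ) * a % q) * ((k:ℤ) + 1)) :
    False := by
  set K : ℤ := (k : ℤ) with hKdef
  have hK1 : 1 ≤ K := by rw [hKdef]; exact_mod_cast hk
  have hq0 : (0:ℤ) < q := by linarith
  have hK0 : (0:ℤ) < K + 1 := by linarith
  set c : ℤ := q / (K + 1) with hcdef
  have hcmod : (K + 1) * c + q % (K + 1) = q := Int.mul_ediv_add_emod q (K + 1)
  have hmod0 : 0 ≤ q % (K + 1) := Int.emod_nonneg _ (ne_of_gt hK0)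
  have hmod1 : q % (K + 1) < K + 1 := Int.emod_lt_of_pos _ hK0
  have hmodne : 0 < q % (K + 1) :=
    lt_of_le_of_ne hmod0 (fun h => hnd (Int.dvd_of_emod_eq_zero h.symm))
  have hlow : (K + 1) * c + 1 ≤ q := by linarith
  have hhigh : q ≤ (K + 1) * c + K := by linarith
  set r : ℕ → ℤ := fun m => ((m : ℤ) * a) % q with hrdef
  have hr0 : ∀ m, 0 ≤ r m := fun m => Int.emod_nonneg _ (ne_of_gt hq0)
  have hr1 : ∀ m, r m < q := fun m => Int.emod_lt_of_pos _ hq0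
  have H : ∀ m : ℕ, 1 ≤ m → m ≤ k → c + 1 ≤ r m ∧ r m ≤ q - (c + 1) := by
    intro m h1 h2
    obtain ⟨f1, f2⟩ := H0 m h1 h2
    constructor
    · by_contra hcc
      push_neg at hcc
      have h5 : (K+1) * r m ≤ (K+1) * c :=
        mul_le_mul_of_nonneg_left (by linarith) (le_of_lt hK0)
      linarith
    · by_contra hcc
      push_neg at hcc
      have h5 : (K+1) * (q - r m) ≤ (K+1) * c :=
        mul_le_mul_of_nonneg_left (by linarith) (le_of_lt hK0)
      linarith
  set s : ℕ → ℤ := fun m => ((K + 1) * r m) / q with hsdef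
  have hs : ∀ m ∈ Finset.Icc 1 k, s m ∈ Finset.Icc (1:ℤ) (K - 1) := by
    intro m hm
    rw [Finset.mem_Icc] at hm ⊢
    obtain ⟨hH1, hH2⟩ := H m hm.1 hm.2
    constructor
    · show 1 ≤ ((K + 1) * r m) / q
      rw [Int.le_ediv_iff_mul_le hq0]
      have h5 : (K+1) * (c+1) ≤ (K+1) * r m := mul_le_mul_of_nonneg_left hH1 (le_of_lt hK0)
      linarith
    · show ((K + 1) * r m) / q ≤ K - 1
      have h9 : ((K + 1) * r m) / q < K := by
        rw [Int.ediv_lt_iff_lt_mul hq0]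
        have h5 : (K+1) * r m ≤ (K+1) * (q - (c+1)) := mul_le_mul_of_nonneg_left hH2 (le_of_lt hK0)
        linarith
      omega
  have hcards : (Finset.Icc (1:ℤ) (K - 1)).card < (Finset.Icc 1 k).card := by
    rw [Int.card_Icc, Nat.card_Icc, hKdef]
    omega
  obtain ⟨i, hi, j, hj, hne, heq⟩ := Finset.exists_ne_map_eq_of_card_lt_of_maps_to hcards hs
  rw [Finset.mem_Icc] at hi hj
  have key : ∀ i j : ℕ, 1 ≤ i → i < j → j ≤ k → s i = s j → False := by
    intro i j hi1 hij hjk hseq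
    have hdi := Int.mul_ediv_add_emod ((K+1) * r i) q
    have hdj := Int.mul_ediv_add_emod ((K+1) * r j) q
    have hei0 : 0 ≤ ((K+1) * r i) % q := Int.emod_nonneg _ (ne_of_gt hq0)
    have hei1 : ((K+1) * r i) % q < q := Int.emod_lt_of_pos _ hq0
    have hej0 : 0 ≤ ((K+1) * r j) % q := Int.emod_nonneg _ (ne_of_gt hq0)
    have hej1 : ((K+1) * r j) % q < q := Int.emod_lt_of_pos _ hq0
    have hseq' : ((K+1) * r i) / q = ((K+1) * r j) / q := hseq
    have hdiff : (K+1) * (r j - r i) = ((K+1) * r j) % q - ((K+1) * r i) % q := by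
      rw [hseq'] at hdi
      linarith
    have habs1 : r j - r i ≤ c := by
      by_contra hcc
      push_neg at hcc
      have h5 : (K+1) * (c+1) ≤ (K+1) * (r j - r i) :=
        mul_le_mul_of_nonneg_left (by linarith) (le_of_lt hK0)
      linarith
    have habs2 : r i - r j ≤ c := by
      by_contra hcc
      push_neg at hcc
      have h5 : (K+1) * (c+1) ≤ (K+1) * (r i - r j) :=
        mul_le_mul_of_nonneg_left (by linarith) (le_of_lt hK0)
      linarith
    set m : ℕ := j - i with hmdef
    have hm1 : 1 ≤ m := by omega
    have hmk : m ≤ k := by omega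
    have hmod : r m = (r j - r i) % q := by
      show ((m : ℤ) * a) % q = _
      have hmc : (m : ℤ) * a = (j : ℤ) * a - (i : ℤ) * a := by
        rw [hmdef]; push_cast [Nat.cast_sub hij.le]; ring
      rw [hmc]
      conv_rhs => rw [hrdef]
      rw [← Int.sub_emod]
    obtain ⟨hd1, hd2⟩ := H m hm1 hmk
    rcases le_or_gt 0 (r j - r i) with hpos | hneg
    · have he : (r j - r i) % q = r j - r i :=
        Int.emod_eq_of_lt hpos (by have := hr1 j; have := hr0 i; linarith)
      rw [he] at hmod
      linarith
    · have he : (r j - r i) % q = r j - r i + q := by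
        have h6 : (r j - r i + q) % q = (r j - r i) % q := by
          have h8 : r j - r i + q = r j - r i + q * 1 := by ring
          rw [h8, Int.add_mul_emod_self_left]
        have h7 : (r j - r i + q) % q = r j - r i + q :=
          Int.emod_eq_of_lt (by linarith) (by have := hr1 j; have := hr0 i; linarith)
        rw [← h6, h7]
      rw [he] at hmod
      linarith
  rcases hne.lt_or_gt with h | h
  · exact key i j hi.1 h hj.2 heq
  · exact key j i hj.1 h hi.2 heq.symm

theorem stmt_11 (k l p : ℕ) (hpp : Nat.Prime p) (hp : p > k + 1)
    (hl : 0 < l) (hnd : ¬ ((k + 1) ∣ l)) :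
    ∀ t : ℚ, (t.den : ℕ) ∣ l * p →
      ∃ i : Fin k, distNearestInt ((t : ℝ) * (((i : ℕ) : ℝ) + 1)) < 1 / ((k : ℝ) + 1) := by
  intro t ht
  have hk1 : 1 ≤ k := by
    rcases Nat.eq_zero_or_pos k with h | h
    · subst h; exact absurd (one_dvd l) hnd
    · exact h
  have hkR : (0:ℝ) < (k:ℝ) + 1 := by positivity
  have hknd : ¬ ((k + 1) ∣ t.den) := by
    intro h
    have h2 : (k + 1) ∣ l * p := h.trans ht
    have hcop : Nat.Coprime (k + 1) p :=
      Nat.coprime_comm.mp (hpp.coprime_iff_not_dvd.mpr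
        (fun hdvd => absurd (Nat.le_of_dvd (by omega) hdvd) (by omega)))
    exact hnd (hcop.dvd_of_dvd_mul_right h2)
  have hden1 : 1 ≤ t.den := t.pos
  have hqRR : (0:ℝ) < (t.den : ℝ) := by exact_mod_cast t.pos
  by_cases hqk : t.den ≤ k
  · -- small denominator: take i + 1 = t.den
    refine ⟨⟨t.den - 1, by omega⟩, ?_⟩
    have hval : (((t.den - 1 : ℕ) : ℝ) + 1) = (t.den : ℝ) := by
      rw [Nat.cast_sub hden1]; push_cast; ring
    show distNearestInt ((t : ℝ) * (((t.den - 1 : ℕ) : ℝ) + 1)) < 1 / ((k : ℝ) + 1)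
    rw [hval]
    have hnum : (t : ℝ) * (t.den : ℝ) = ((t.num : ℤ) : ℝ) := by
      rw [Rat.cast_def]; field_simp
    rw [hnum]
    unfold distNearestInt
    rw [round_intCast, sub_self, abs_zero]
    positivity
  · -- main case: t.den ≥ k + 2
    by_contra hcon
    push_neg at hcon
    have hIntnd : ¬ (((k:ℤ) + 1) ∣ ((t.den : ℕ) : ℤ)) := by
      intro h
      apply hknd
      have h2 : ((k + 1 : ℕ) : ℤ) ∣ ((t.den : ℕ) : ℤ) := by push_cast; exact_mod_cast h
      exact_mod_cast h2
    have hq2 : (k:ℤ) + 2 ≤ ((t.den : ℕ) : ℤ) := by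
      have hne : t.den ≠ k + 1 := by
        intro h
        apply hIntnd
        rw [h]; push_cast; exact dvd_rfl
      have : k + 2 ≤ t.den := by omega
      exact_mod_cast this
    refine main_aux k ((t.den : ℕ) : ℤ) t.num hk1 hq2 hIntnd ?_
    intro m h1 h2
    have hi := hcon ⟨m - 1, by omega⟩
    have hcast : ((((⟨m - 1, by omega⟩ : Fin k) : ℕ)) : ℝ) + 1 = (m : ℝ) := by
      show (((m - 1 : ℕ)) : ℝ) + 1 = (m : ℝ)
      rw [Nat.cast_sub h1]; push_cast; ring
    rw [hcast] at hi
    obtain ⟨hb1, hb2⟩ := dist_le_bounds t m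
    have e1 : 1/((k:ℝ)+1) ≤ (((m * t.num % (t.den : ℤ)) : ℤ) : ℝ)/(t.den : ℝ) := le_trans hi hb1
    have e2 : 1/((k:ℝ)+1) ≤ ((((t.den : ℤ) - m * t.num % (t.den : ℤ)) : ℤ) : ℝ)/(t.den : ℝ) :=
      le_trans hi hb2
    rw [div_le_div_iff₀ hkR hqRR, one_mul] at e1 e2
    constructor
    · exact_mod_cast e1
    · exact_mod_cast e2
end

section
/- Let (u_1,...,u_k) be a tuple of positive integers and suppose there exists a real T and ε > 0 such that every t ∈ (T, T+ε) satisfies ‖t·u_i‖ ≥ 1/(k+1) for all i. Then there exists a positive integer L such that for every integer d ≥ L, the tuple has a witness time in (1/d)·Z. -/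
lemma exists_int_div_mem_Ioo {T ε d : ℝ} (hd : 0 < d) (hdε : 1 < d * ε) :
    ∃ n : ℤ, (n : ℝ) / d ∈ Set.Ioo T (T + ε) := by
  refine ⟨⌊d * T⌋ + 1, ?_, ?_⟩
  · rw [lt_div_iff₀ hd]
    push_cast
    linarith [Int.lt_floor_add_one (d * T)]
  · rw [div_lt_iff₀ hd]
    push_cast
    linarith [Int.floor_le (d * T)]

theorem stmt_15_general (k : ℕ) (u : Fin k → ℕ)
    (T ε : ℝ) (hε : 0 < ε)
    (h : ∀ t : ℝ, T < t → t < T + ε →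
      ∀ i : Fin k, distNearestInt (t * (u i : ℝ)) ≥ 1 / ((k : ℝ) + 1)) :
    ∃ L : ℕ, 0 < L ∧ ∀ d : ℕ, L ≤ d →
      ∃ n : ℤ, ∀ i : Fin k,
        distNearestInt (((n : ℝ) / (d : ℝ)) * (u i : ℝ)) ≥ 1 / ((k : ℝ) + 1) := by
  refine ⟨⌈1 / ε⌉₊ + 1, Nat.succ_pos _, fun d hd => ?_⟩
  have hεd : 1 / ε < d := by
    calc 1 / ε ≤ ⌈1 / ε⌉₊ := Nat.le_ceil _
      _ < d := by exact_mod_cast hd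
  have hd : (0 : ℝ) < d := (one_div_pos.mpr hε).trans hεd
  obtain ⟨n, hTn, hnT⟩ := exists_int_div_mem_Ioo hd ((div_lt_iff₀ hε).mp hεd)
  exact ⟨n, h _ hTn hnT⟩

theorem stmt_15 (k : ℕ) (u : Fin k → ℕ) (hupos : ∀ i, 0 < u i)
    (T ε : ℝ) (hε : 0 < ε)
    (h : ∀ t : ℝ, T < t → t < T + ε →
      ∀ i : Fin k, distNearestInt (t * (u i : ℝ)) ≥ 1 / ((k : ℝ) + 1)) :
    ∃ L : ℕ, 0 < L ∧ ∀ d : ℕ, L ≤ d →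
      ∃ n : ℤ, ∀ i : Fin k,
        distNearestInt (((n : ℝ) / (d : ℝ)) * (u i : ℝ)) ≥ 1 / ((k : ℝ) + 1) :=
  stmt_15_general k u T ε hε h
end
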